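/- arXiv:1103.0061 — 9 statements merged into one kernel-verified Lean document; each statement's English description precedes it below -/
import Mathlib

section
/- Let G be a pure-impulse profile of Klaus–Shaw type. Then for every w with G(0) < w < 0, the inverse function is recovered from the WKB phase integral by the Abel-type inversion formula: (2/π) · ∫_{v=-w}^{-G(0)} [ v / √(v² − w²) ] · ( ∫_{s=0}^{G⁻¹(−v)} ds / √(G(s)² − v²) ) dv = G⁻¹(w). -/
/-!
Substituting the inner integral into the outer one and swapping them (Tonelli–Fubini for a
nonnegative integrand), the variable `s` runs over `(0, G⁻¹(w))` and, for each such `s`, `v` runs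
over `(-w, -G(s))`. The resulting kernel integral
`∫_a^b v dv / (√(v² - a²) √(b² - v²)) = π / 2` does not depend on `0 ≤ a < b` (an antiderivative
is `½ arcsin ((2v² - a² - b²) / (b² - a²))`), so the double integral is `(π / 2) · G⁻¹(w)`.
-/

open MeasureTheory Real Filter Set

noncomputable def abelKernel (a b x : ℝ) : ℝ := x / (√(x ^ 2 - a ^ 2) * √(b ^ 2 - x ^ 2))

section AbelKernel

variable {a b c : ℝ}

theorem hasDerivAt_arcsin_div_two_abelKernel {x : ℝ} (hax : a ^ 2 < x ^ 2) (hxb : x ^ 2 < b ^ 2) :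
    HasDerivAt (fun y => arcsin ((2 * y ^ 2 - a ^ 2 - b ^ 2) / (b ^ 2 - a ^ 2)) / 2)
      (abelKernel a b x) x := by
  have hD : 0 < b ^ 2 - a ^ 2 := by linarith
  have hA := sqrt_pos.2 (sub_pos.2 hax)
  have hB := sqrt_pos.2 (sub_pos.2 hxb)
  set q := (2 * x ^ 2 - a ^ 2 - b ^ 2) / (b ^ 2 - a ^ 2) with hq
  have hq_ne_neg_one : q ≠ -1 := by rw [hq, ne_eq, div_eq_iff hD.ne']; nlinarith
  have hq_ne_one : q ≠ 1 := by rw [hq, ne_eq, div_eq_iff hD.ne']; nlinarith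
  have hsqrt : √(1 - q ^ 2) = 2 * √(x ^ 2 - a ^ 2) * √(b ^ 2 - x ^ 2) / (b ^ 2 - a ^ 2) := by
    have h : 1 - q ^ 2 = (2 * √(x ^ 2 - a ^ 2) * √(b ^ 2 - x ^ 2) / (b ^ 2 - a ^ 2)) ^ 2 := by
      rw [hq, div_pow, div_pow, mul_pow, mul_pow, sq_sqrt (by linarith), sq_sqrt (by linarith)]
      field_simp
      ring
    rw [h, sqrt_sq (by positivity)]
  have hinner : HasDerivAt (fun x : ℝ => (2 * x ^ 2 - a ^ 2 - b ^ 2) / (b ^ 2 - a ^ 2))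
      (2 * (2 * x) / (b ^ 2 - a ^ 2)) x := by
    simpa using ((((hasDerivAt_pow 2 x).const_mul 2).sub_const (a ^ 2)).sub_const (b ^ 2)).div_const
      (b ^ 2 - a ^ 2)
  refine (((hasDerivAt_arcsin hq_ne_neg_one hq_ne_one).comp x hinner).div_const 2).congr_deriv ?_
  rw [hsqrt, abelKernel]
  field_simp

theorem integrableOn_abelKernel_Ioc_self (ha : 0 ≤ a) (hab : a < b) :
    IntegrableOn (abelKernel a b) (Ioc a b) :=
  intervalIntegral.integrableOn_deriv_of_nonneg (by fun_prop)
    (fun x hx =>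
      hasDerivAt_arcsin_div_two_abelKernel (by nlinarith [hx.1]) (by nlinarith [hx.1, hx.2]))
    (fun x hx => div_nonneg (ha.trans hx.1.le) (by positivity))

theorem integral_abelKernel_Ioc_self (ha : 0 ≤ a) (hab : a < b) :
    ∫ x in Ioc a b, abelKernel a b x = π / 2 := by
  have hD : b ^ 2 - a ^ 2 ≠ 0 := by nlinarith
  rw [← intervalIntegral.integral_of_le hab.le,
    intervalIntegral.integral_eq_sub_of_hasDerivAt_of_le hab.le (by fun_prop)
      (fun x hx =>
        hasDerivAt_arcsin_div_two_abelKernel (by nlinarith [hx.1]) (by nlinarith [hx.1, hx.2]))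
      ((intervalIntegrable_iff_integrableOn_Ioc_of_le hab.le).2
        (integrableOn_abelKernel_Ioc_self ha hab))]
  have hright : (2 * b ^ 2 - a ^ 2 - b ^ 2) / (b ^ 2 - a ^ 2) = 1 := by field_simp; ring
  have hleft : (2 * a ^ 2 - a ^ 2 - b ^ 2) / (b ^ 2 - a ^ 2) = -1 := by field_simp; ring
  simp only [hright, hleft, arcsin_one, arcsin_neg_one]
  ring

/-- `√` of a negative number is `0` and `x / 0 = 0`, so the kernel may be integrated past `b`. -/
theorem abelKernel_eq_zero_of_le (hb : 0 ≤ b) {x : ℝ} (hbx : b ≤ x) : abelKernel a b x = 0 := by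
  rw [abelKernel, sqrt_eq_zero'.2 (by nlinarith : b ^ 2 - x ^ 2 ≤ 0), mul_zero, div_zero]

theorem integrableOn_abelKernel_Ioc (ha : 0 ≤ a) (hab : a < b) (hbc : b ≤ c) :
    IntegrableOn (abelKernel a b) (Ioc a c) := by
  rw [← Ioc_union_Ioc_eq_Ioc hab.le hbc]
  refine (integrableOn_abelKernel_Ioc_self ha hab).union
    (integrableOn_zero.congr_fun (fun x hx => ?_) measurableSet_Ioc)
  exact (abelKernel_eq_zero_of_le (ha.trans hab.le) hx.1.le).symm

theorem integral_abelKernel_Ioc (ha : 0 ≤ a) (hab : a < b) (hbc : b ≤ c) :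
    ∫ x in Ioc a c, abelKernel a b x = π / 2 := by
  refine (setIntegral_eq_of_subset_of_forall_sdiff_eq_zero measurableSet_Ioc
    (Ioc_subset_Ioc_right hbc) fun x hx => ?_).trans (integral_abelKernel_Ioc_self ha hab)
  exact abelKernel_eq_zero_of_le (ha.trans hab.le) (not_le.1 fun h => hx.2 ⟨hx.1.1, h⟩).le

end AbelKernel

theorem integral_integral_swap_of_ae_integral_eq_const {α β : Type*} [MeasurableSpace α]
    [MeasurableSpace β] {μ : Measure α} {ν : Measure β} [SFinite μ] [IsFiniteMeasure ν]
    {f : α → β → ℝ} {C : ℝ} (hf : AEStronglyMeasurable (Function.uncurry f) (μ.prod ν))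
    (hf_nonneg : ∀ᵐ y ∂ν, 0 ≤ᵐ[μ] (f · y)) (hf_int : ∀ᵐ y ∂ν, Integrable (f · y) μ)
    (hC : ∀ᵐ y ∂ν, ∫ x, f x y ∂μ = C) :
    ∫ x, ∫ y, f x y ∂ν ∂μ = ν.real univ * C := by
  have hnorm : ∀ᵐ y ∂ν, ∫ x, ‖f x y‖ ∂μ = C := by
    filter_upwards [hf_nonneg, hC] with y hy hyC
    rw [← hyC]
    exact integral_congr_ae (hy.mono fun x hx => norm_of_nonneg hx)
  have hprod : Integrable (Function.uncurry f) (μ.prod ν) :=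
    (integrable_prod_iff' hf).2 ⟨hf_int, (integrable_const C).congr (hnorm.mono fun _ h => h.symm)⟩
  rw [integral_integral_swap hprod, integral_congr_ae hC, integral_const, smul_eq_mul]

theorem mul_intervalIntegral_eq_setIntegral_abelKernel {G : ℝ → ℝ}
    (hG_mono : StrictMonoOn G (Ioi 0)) {c d v w : ℝ} (hd : 0 < d) (hdc : d < c) (hGd : G d = -v)
    (hGc : G c = w) (hw : w < 0) :
    v / √(v ^ 2 - w ^ 2) * ∫ s in (0 : ℝ)..d, 1 / √(G s ^ 2 - v ^ 2) =
      ∫ s in Ioo 0 c, abelKernel (-w) (-G s) v := by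
  have hvanish : ∀ s ∈ Ioo 0 c \ Ioc 0 d,
      v / √(v ^ 2 - w ^ 2) * (1 / √(G s ^ 2 - v ^ 2)) = 0 := by
    rintro s ⟨hs, hs'⟩
    have hvs : -v < G s := hGd ▸ hG_mono hd hs.1 (not_le.1 fun h => hs' ⟨hs.1, h⟩)
    have hs0 : G s < 0 := (hGc ▸ hG_mono hs.1 (hd.trans hdc) hs.2).trans hw
    rw [sqrt_eq_zero'.2 (by nlinarith : G s ^ 2 - v ^ 2 ≤ 0), div_zero, mul_zero]
  rw [intervalIntegral.integral_of_le hd.le, ← integral_const_mul,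
    ← setIntegral_eq_of_subset_of_forall_sdiff_eq_zero measurableSet_Ioo
      (fun s hs => ⟨hs.1, hs.2.trans_lt hdc⟩) hvanish]
  refine setIntegral_congr_fun measurableSet_Ioo fun s _ => ?_
  rw [abelKernel, neg_sq, neg_sq, div_mul_div_comm, mul_one]

theorem abel_inversion_of_wkb_phase_general
    (G Ginv : ℝ → ℝ)
    (hG_smooth : ContDiff ℝ 1 G)
    (hG_mono : StrictMonoOn G (Set.Ioi (0 : ℝ)))
    (hGinv : ∀ w, G 0 < w → w < 0 → 0 < Ginv w ∧ G (Ginv w) = w)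
    (w : ℝ) (hw₁ : G 0 < w) (hw₂ : w < 0) :
    (2 / Real.pi) *
        ∫ v in (-w)..(-(G 0)),
          (v / Real.sqrt (v ^ 2 - w ^ 2)) *
            ∫ s in (0 : ℝ)..(Ginv (-v)), 1 / Real.sqrt ((G s) ^ 2 - v ^ 2)
      = Ginv w := by
  have hG_cont : Continuous G := hG_smooth.continuous
  obtain ⟨hc, hGc⟩ := hGinv w hw₁ hw₂
  have hG_mono₀ : MonotoneOn G (insert 0 (Ioi 0)) :=
    hG_mono.monotoneOn.insert_of_continuousWithinAt (mem_closure_iff_clusterPt.1 (by simp))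
      hG_cont.continuousWithinAt
  have hG_bounds : ∀ s ∈ Ioo 0 (Ginv w), -w < -G s ∧ -G s ≤ -G 0 := fun s hs =>
    ⟨neg_lt_neg (hGc ▸ hG_mono hs.1 hc hs.2),
      neg_le_neg (hG_mono₀ (mem_insert 0 _) (mem_insert_of_mem 0 hs.1) hs.1.le)⟩
  have hinner : ∀ v ∈ Ioo (-w) (-G 0),
      v / √(v ^ 2 - w ^ 2) * ∫ s in (0 : ℝ)..Ginv (-v), 1 / √(G s ^ 2 - v ^ 2) =
        ∫ s in Ioo 0 (Ginv w), abelKernel (-w) (-G s) v := fun v hv => by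
    obtain ⟨hd, hGd⟩ := hGinv (-v) (by linarith [hv.2]) (by linarith [hv.1])
    exact mul_intervalIntegral_eq_setIntegral_abelKernel hG_mono hd
      ((hG_mono.lt_iff_lt hd hc).1 (by linarith [hv.1])) hGd hGc hw₂
  rw [intervalIntegral.integral_of_le (by linarith), integral_Ioc_eq_integral_Ioo,
    setIntegral_congr_fun measurableSet_Ioo hinner, ← integral_Ioc_eq_integral_Ioo,
    integral_integral_swap_of_ae_integral_eq_const (C := π / 2) ?meas ?nonneg ?int ?val,
    measureReal_restrict_apply_univ, volume_real_Ioo_of_le hc.le, sub_zero]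
  · field_simp
  case meas => exact Measurable.aestronglyMeasurable (by unfold abelKernel; fun_prop)
  case nonneg =>
    exact ae_restrict_of_forall_mem measurableSet_Ioo fun s _ =>
      ae_restrict_of_forall_mem measurableSet_Ioc fun v hv =>
        div_nonneg (by linarith [hv.1]) (by positivity)
  case int =>
    exact ae_restrict_of_forall_mem measurableSet_Ioo fun s hs =>
      integrableOn_abelKernel_Ioc (by linarith) (hG_bounds s hs).1 (hG_bounds s hs).2
  case val =>
    exact ae_restrict_of_forall_mem measurableSet_Ioo fun s hs =>
      integral_abelKernel_Ioc (by linarith) (hG_bounds s hs).1 (hG_bounds s hs).2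

/-- **Abel-type inversion of the WKB phase integral.**
For a pure-impulse Klaus–Shaw profile `G`, with `Ginv` the inverse of `G` restricted to
the positive half-line, the inverse function is recovered from (minus the derivative of)
the WKB phase integral:
`(2/π) ∫_{-w}^{-G(0)} (v/√(v²−w²)) · (∫₀^{G⁻¹(−v)} ds/√(G(s)²−v²)) dv = G⁻¹(w)`
for every `G(0) < w < 0`. -/
theorem abel_inversion_of_wkb_phase
    (G Ginv : ℝ → ℝ)
    (hG_smooth : ContDiff ℝ 1 G)
    (hG_neg : ∀ x, G x < 0)
    (hG_even : ∀ x, G (-x) = G x)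
    (hG_mono : StrictMonoOn G (Set.Ioi (0 : ℝ)))
    (hG_deriv : ∀ x, 0 < x → 0 < deriv G x)
    (hG_int : Integrable G)
    (hG_lim : Tendsto G atTop (nhds 0))
    (hGinv : ∀ w, G 0 < w → w < 0 → 0 < Ginv w ∧ G (Ginv w) = w)
    (w : ℝ) (hw₁ : G 0 < w) (hw₂ : w < 0) :
    (2 / Real.pi) *
        ∫ v in (-w)..(-(G 0)),
          (v / Real.sqrt (v ^ 2 - w ^ 2)) *
            ∫ s in (0 : ℝ)..(Ginv (-v)), 1 / Real.sqrt ((G s) ^ 2 - v ^ 2)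
      = Ginv w :=
  abel_inversion_of_wkb_phase_general G Ginv hG_smooth hG_mono hGinv w hw₁ hw₂
end

section
/- Let G be a pure-impulse profile of Klaus–Shaw type, and for 0 < v < −G(0) define the WKB phase integral Ψ̃(v) := (1/2) ∫_{s=0}^{G⁻¹(−v)} √(G(s)² − v²) ds. Then: (i) Ψ̃ is strictly decreasing on (0, −G(0)); (ii) Ψ̃(v) → (1/2)∫₀^∞ (−G(s)) ds (which equals one quarter of the L¹ norm of G) as v → 0⁺; and (iii) Ψ̃(v) → 0 as v → (−G(0))⁻. -/
open MeasureTheory Real Filter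

/-- The WKB phase integral `Ψ̃(v) = (1/2)∫₀^{G⁻¹(−v)} √(G(s)²−v²) ds` associated with
a pure-impulse Klaus–Shaw profile `G`. -/
noncomputable def wkbPhase (G Ginv : ℝ → ℝ) (v : ℝ) : ℝ :=
  (1 / 2) * ∫ s in (0 : ℝ)..(Ginv (-v)), Real.sqrt ((G s) ^ 2 - v ^ 2)

/-! Past `G⁻¹(−v)` the integrand `√(G(s)² − v²)` is `0` (Lean's `√` vanishes on negatives), so
`2Ψ̃(v) = ∫₀^∞ √(G(s)² − v²) ds`. By dominated convergence with majorant `|G|` this integral is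
continuous in `v` on all of `ℝ`, so the two limits are its values at `v = 0` and `v = −G(0)`.
Strict monotonicity is pointwise monotonicity of the integrand, strict near `s = 0`. -/

open Set

lemma sqrt_sq_sub_sq_le_abs (g v : ℝ) : √(g ^ 2 - v ^ 2) ≤ |g| := by
  rw [← sqrt_sq_eq_abs]
  exact sqrt_le_sqrt (by nlinarith [sq_nonneg v])

lemma setIntegral_Ioi_eq_intervalIntegral_of_eq_zero {f : ℝ → ℝ} {a b : ℝ} (hab : a ≤ b)
    (hf : ∀ x, b < x → f x = 0) : ∫ x in Ioi a, f x = ∫ x in a..b, f x := by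
  rw [intervalIntegral.integral_of_le hab]
  exact setIntegral_eq_of_subset_of_forall_sdiff_eq_zero measurableSet_Ioi Ioc_subset_Ioi_self
    fun x hx => hf x (not_le.mp fun hxb => hx.2 ⟨hx.1, hxb⟩)

lemma integral_eq_two_mul_setIntegral_Ioi_of_even {f : ℝ → ℝ} (hf : ∀ x, f (-x) = f x) :
    ∫ x, f x = 2 * ∫ x in Ioi 0, f x := by
  have hf_abs : f = fun x => f |x| := by
    funext x
    rcases abs_choice x with h | h <;> rw [h]
    exact (hf x).symm
  rw [hf_abs, ← integral_comp_abs]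
  simp only [abs_abs]

lemma ContinuousWithinAt.apply_le_of_monotoneOn_Ioi {G : ℝ → ℝ} {a s : ℝ}
    (hG : ContinuousWithinAt G (Ioi a) a) (hmono : MonotoneOn G (Ioi a)) (hs : a < s) :
    G a ≤ G s := by
  have ha : a ∈ closure (Ioo a s) := by
    rw [closure_Ioo hs.ne]
    exact left_mem_Icc.mpr hs.le
  exact ContinuousWithinAt.closure_le ha (hG.mono Ioo_subset_Ioi_self) continuousWithinAt_const
    fun t ht => hmono ht.1 hs ht.2.le

lemma continuous_integral_sqrt_sq_sub_sq {α : Type*} [MeasurableSpace α] {μ : Measure α}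
    {G : α → ℝ} (hG : Integrable G μ) : Continuous fun v => ∫ s, √(G s ^ 2 - v ^ 2) ∂μ := by
  refine continuous_of_dominated (bound := fun s => |G s|) (fun v => ?_) (fun v => ?_) hG.abs ?_
  · exact continuous_sqrt.comp_aestronglyMeasurable
      ((hG.aestronglyMeasurable.pow 2).sub aestronglyMeasurable_const)
  · refine ae_of_all _ fun s => ?_
    rw [norm_of_nonneg (sqrt_nonneg _)]
    exact sqrt_sq_sub_sq_le_abs _ _
  · exact ae_of_all _ fun s => by fun_prop

noncomputable def phaseIntegral (G : ℝ → ℝ) (v : ℝ) : ℝ :=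
  ∫ s in Ioi 0, √(G s ^ 2 - v ^ 2)

section KlausShaw

variable {G Ginv : ℝ → ℝ}

lemma phaseIntegral_zero (hG_neg : ∀ x, G x < 0) :
    phaseIntegral G 0 = ∫ s in Ioi 0, -G s := by
  simp only [phaseIntegral, zero_pow two_ne_zero, sub_zero, sqrt_sq_eq_abs, abs_of_neg (hG_neg _)]

lemma phaseIntegral_neg_apply_zero (hG : Continuous G) (hG_neg : ∀ x, G x < 0)
    (hG_mono : MonotoneOn G (Ioi 0)) : phaseIntegral G (-G 0) = 0 := by
  refine setIntegral_eq_zero_of_forall_eq_zero fun s hs => sqrt_eq_zero_of_nonpos ?_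
  have := hG.continuousWithinAt.apply_le_of_monotoneOn_Ioi hG_mono hs
  nlinarith [hG_neg s]

lemma phaseIntegral_eq_intervalIntegral (hG_neg : ∀ x, G x < 0) (hG_mono : MonotoneOn G (Ioi 0))
    {a v w : ℝ} (ha : 0 < a) (hGa : G a = -v) (hvw : v ≤ w) :
    phaseIntegral G w = ∫ s in 0..a, √(G s ^ 2 - w ^ 2) := by
  refine setIntegral_Ioi_eq_intervalIntegral_of_eq_zero ha.le fun s hs => ?_
  refine sqrt_eq_zero_of_nonpos ?_
  have := hG_mono ha (ha.trans hs) hs.le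
  nlinarith [hG_neg s, hG_neg a]

lemma wkbPhase_eq_half_phaseIntegral (hG_neg : ∀ x, G x < 0) (hG_mono : MonotoneOn G (Ioi 0))
    (hGinv : ∀ w, G 0 < w → w < 0 → 0 < Ginv w ∧ G (Ginv w) = w) :
    EqOn (wkbPhase G Ginv) (fun v => 1 / 2 * phaseIntegral G v) (Ioo 0 (-G 0)) := by
  intro v hv
  obtain ⟨ha, hGa⟩ := hGinv (-v) (by linarith [hv.2]) (by linarith [hv.1])
  show _ = 1 / 2 * phaseIntegral G v
  rw [wkbPhase, phaseIntegral_eq_intervalIntegral hG_neg hG_mono ha hGa le_rfl]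

lemma strictAntiOn_phaseIntegral (hG : Continuous G) (hG_neg : ∀ x, G x < 0)
    (hG_mono : MonotoneOn G (Ioi 0))
    (hGinv : ∀ w, G 0 < w → w < 0 → 0 < Ginv w ∧ G (Ginv w) = w) :
    StrictAntiOn (phaseIntegral G) (Ioo 0 (-G 0)) := by
  intro v hv w hw hvw
  obtain ⟨ha, hGa⟩ := hGinv (-v) (by linarith [hv.2]) (by linarith [hv.1])
  rw [phaseIntegral_eq_intervalIntegral hG_neg hG_mono ha hGa hvw.le,
    phaseIntegral_eq_intervalIntegral hG_neg hG_mono ha hGa le_rfl]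
  refine intervalIntegral.integral_lt_integral_of_continuousOn_of_le_of_exists_lt ha
    (by fun_prop) (by fun_prop) (fun s _ => sqrt_le_sqrt (by nlinarith [hv.1]))
    ⟨0, left_mem_Icc.mpr ha.le, sqrt_lt_sqrt ?_ (by nlinarith [hv.1])⟩
  nlinarith [hw.1, hw.2]

end KlausShaw

theorem wkb_phase_monotone_and_limits_general
    (G Ginv : ℝ → ℝ)
    (hG_smooth : ContDiff ℝ 1 G)
    (hG_neg : ∀ x, G x < 0)
    (hG_even : ∀ x, G (-x) = G x)
    (hG_mono : StrictMonoOn G (Set.Ioi (0 : ℝ)))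
    (hG_int : Integrable G)
    (hGinv : ∀ w, G 0 < w → w < 0 → 0 < Ginv w ∧ G (Ginv w) = w) :
    StrictAntiOn (wkbPhase G Ginv) (Set.Ioo 0 (-(G 0))) ∧
    Tendsto (wkbPhase G Ginv) (nhdsWithin 0 (Set.Ioi 0))
      (nhds ((1 / 2) * ∫ s in Set.Ioi (0 : ℝ), (-(G s)))) ∧
    (1 / 2) * (∫ s in Set.Ioi (0 : ℝ), (-(G s))) = (1 / 4) * ∫ x, |G x| ∧
    Tendsto (wkbPhase G Ginv) (nhdsWithin (-(G 0)) (Set.Iio (-(G 0)))) (nhds 0) := by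
  have hG : Continuous G := hG_smooth.continuous
  have hc : 0 < -G 0 := neg_pos.mpr (hG_neg 0)
  have hΦ : Continuous (phaseIntegral G) := continuous_integral_sqrt_sq_sub_sq hG_int.integrableOn
  have hΨ := wkbPhase_eq_half_phaseIntegral hG_neg hG_mono.monotoneOn hGinv
  refine ⟨fun v hv w hw hvw => ?_, ?_, ?_, ?_⟩
  · rw [hΨ hv, hΨ hw]
    linarith [strictAntiOn_phaseIntegral hG hG_neg hG_mono.monotoneOn hGinv hv hw hvw]
  · have := ((hΦ.tendsto 0).mono_left (nhdsWithin_le_nhds (s := Ioi 0))).const_mul (1 / 2)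
    rw [phaseIntegral_zero hG_neg] at this
    exact this.congr' (eventuallyEq_of_mem (Ioo_mem_nhdsGT hc) hΨ.symm)
  · rw [integral_eq_two_mul_setIntegral_Ioi_of_even fun x => by rw [hG_even],
      setIntegral_congr_fun measurableSet_Ioi fun x _ => abs_of_neg (hG_neg x)]
    ring
  · have := ((hΦ.tendsto (-G 0)).mono_left
      (nhdsWithin_le_nhds (s := Iio (-G 0)))).const_mul (1 / 2)
    rw [phaseIntegral_neg_apply_zero hG hG_neg hG_mono.monotoneOn, mul_zero] at this
    exact this.congr' (eventuallyEq_of_mem (Ioo_mem_nhdsLT hc) hΨ.symm)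

/-- For a pure-impulse Klaus–Shaw profile `G`, the WKB phase integral `Ψ̃` is
(i) strictly decreasing on `(0, −G(0))`,
(ii) tends to `(1/2)∫₀^∞ (−G(s)) ds` (one quarter of the `L¹` norm of `G`) as `v → 0⁺`, and
(iii) tends to `0` as `v → (−G(0))⁻`. -/
theorem wkb_phase_monotone_and_limits
    (G Ginv : ℝ → ℝ)
    (hG_smooth : ContDiff ℝ 1 G)
    (hG_neg : ∀ x, G x < 0)
    (hG_even : ∀ x, G (-x) = G x)
    (hG_mono : StrictMonoOn G (Set.Ioi (0 : ℝ)))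
    (hG_deriv : ∀ x, 0 < x → 0 < deriv G x)
    (hG_int : Integrable G)
    (hG_lim : Tendsto G atTop (nhds 0))
    (hGinv : ∀ w, G 0 < w → w < 0 → 0 < Ginv w ∧ G (Ginv w) = w) :
    StrictAntiOn (wkbPhase G Ginv) (Set.Ioo 0 (-(G 0))) ∧
    Tendsto (wkbPhase G Ginv) (nhdsWithin 0 (Set.Ioi 0))
      (nhds ((1 / 2) * ∫ s in Set.Ioi (0 : ℝ), (-(G s)))) ∧
    (1 / 2) * (∫ s in Set.Ioi (0 : ℝ), (-(G s))) = (1 / 4) * ∫ x, |G x| ∧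
    Tendsto (wkbPhase G Ginv) (nhdsWithin (-(G 0)) (Set.Iio (-(G 0)))) (nhds 0) :=
  wkb_phase_monotone_and_limits_general G Ginv hG_smooth hG_neg hG_even hG_mono hG_int hGinv
end

section
/- Let A > 0. For every v with 0 < v < 4A, setting x₊ := arccosh(4A/v) (the unique positive solution of 4A·sech(x₊) = v), the WKB phase integral for the Satsuma–Yajima impulse profile G(x) = −4A·sech(x) evaluates in closed form: (1/2) ∫_{s=0}^{x₊} √(16A²·sech(s)² − v²) ds = π·A − π·v/4. -/
/-!
Put `v = 4A sech t`. Then the integrand is `4A √(sech² s - sech² t)`, and on `(0, t)` the function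
`F(x) = arcsin (tanh x / tanh t) - sech t · arcsin (sinh x / sinh t)` is a primitive of
`q(x) = √(sech² x - sech² t)`: the two arcsines have derivatives `sech² x / q` and `sech t / q`,
because `tanh² t - tanh² x = q²` and `sinh² t - sinh² x = (cosh t cosh x q)²`.
As `F 0 = 0` and `F t = π/2 (1 - sech t)`, the phase is `πA (1 - sech t) = πA - πv/4`.
-/

open Real

namespace Real

theorem tanh_sq_add_inv_cosh_sq (x : ℝ) : tanh x ^ 2 + (cosh x)⁻¹ ^ 2 = 1 := by
  have hc := (cosh_pos x).ne'
  rw [tanh_eq_sinh_div_cosh]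
  field_simp
  linear_combination (cosh_sq x).symm

theorem hasDerivAt_tanh (x : ℝ) : HasDerivAt tanh ((cosh x)⁻¹ ^ 2) x := by
  have h := (hasDerivAt_sinh x).div (hasDerivAt_cosh x) (cosh_pos x).ne'
  rw [show tanh = sinh / cosh from funext tanh_eq_sinh_div_cosh]
  refine h.congr_deriv ?_
  field_simp
  linear_combination cosh_sq x

theorem continuous_tanh : Continuous tanh :=
  continuous_iff_continuousAt.2 fun x => (hasDerivAt_tanh x).continuousAt

theorem sqrt_one_sub_div_sq {y c : ℝ} (hc : 0 < c) : √(1 - (y / c) ^ 2) = √(c ^ 2 - y ^ 2) / c := by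
  rw [← sqrt_sq hc.le, ← sqrt_div' _ (sq_nonneg c), sqrt_sq hc.le]
  congr 1
  field_simp

end Real

theorem HasDerivAt.arcsin_div {f : ℝ → ℝ} {f' c x : ℝ} (hf : HasDerivAt f f' x) (hfc : |f x| < c) :
    HasDerivAt (fun y => arcsin (f y / c)) (f' / √(c ^ 2 - f x ^ 2)) x := by
  have hc : 0 < c := (abs_nonneg _).trans_lt hfc
  obtain ⟨hlo, hhi⟩ := abs_lt.1 hfc
  have hne_neg_one : f x / c ≠ -1 := by
    rw [Ne, div_eq_iff hc.ne']; linarith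
  have hne_one : f x / c ≠ 1 := by
    rw [Ne, div_eq_iff hc.ne']; linarith
  refine ((hasDerivAt_arcsin hne_neg_one hne_one).comp x (hf.div_const c)).congr_deriv ?_
  rw [sqrt_one_sub_div_sq hc]
  field_simp

noncomputable def sechPhasePrimitive (t x : ℝ) : ℝ :=
  arcsin (tanh x / tanh t) - (cosh t)⁻¹ * arcsin (sinh x / sinh t)

theorem continuous_sechPhasePrimitive (t : ℝ) : Continuous (sechPhasePrimitive t) :=
  (continuous_arcsin.comp (continuous_tanh.div_const _)).sub
    (continuous_const.mul (continuous_arcsin.comp (continuous_sinh.div_const _)))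

theorem sechPhasePrimitive_zero (t : ℝ) : sechPhasePrimitive t 0 = 0 := by
  simp [sechPhasePrimitive]

theorem sechPhasePrimitive_self {t : ℝ} (ht : 0 < t) :
    sechPhasePrimitive t t = π / 2 * (1 - (cosh t)⁻¹) := by
  have hsinh : sinh t ≠ 0 := (sinh_pos_iff.2 ht).ne'
  have htanh : tanh t ≠ 0 := by
    rw [tanh_eq_sinh_div_cosh]; exact div_ne_zero hsinh (cosh_pos t).ne'
  rw [sechPhasePrimitive, div_self htanh, div_self hsinh, arcsin_one]
  ring

theorem hasDerivAt_sechPhasePrimitive {t x : ℝ} (hx : 0 < x) (hxt : x < t) :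
    HasDerivAt (sechPhasePrimitive t) √((cosh x)⁻¹ ^ 2 - (cosh t)⁻¹ ^ 2) x := by
  have hct := cosh_pos t
  have ht := hx.trans hxt
  have hcosh : cosh x < cosh t := cosh_lt_cosh.2 (by rwa [abs_of_pos hx, abs_of_pos ht])
  have hsech : 0 < (cosh x)⁻¹ ^ 2 - (cosh t)⁻¹ ^ 2 := sub_pos.2 (by gcongr)
  set q := √((cosh x)⁻¹ ^ 2 - (cosh t)⁻¹ ^ 2)
  have hq2 : q ^ 2 = (cosh x)⁻¹ ^ 2 - (cosh t)⁻¹ ^ 2 := sq_sqrt hsech.le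
  have hq : 0 < q := sqrt_pos.2 hsech
  have htanh : tanh t ^ 2 - tanh x ^ 2 = q ^ 2 := by
    rw [hq2]; linear_combination tanh_sq_add_inv_cosh_sq t - tanh_sq_add_inv_cosh_sq x
  have hsinh : sinh t ^ 2 - sinh x ^ 2 = (cosh t * cosh x * q) ^ 2 := by
    rw [mul_pow, hq2]; field_simp; linear_combination cosh_sq x - cosh_sq t
  have h₁ := (hasDerivAt_tanh x).arcsin_div (c := tanh t) <|
    abs_lt_of_sq_lt_sq (by rw [← sub_pos, htanh]; positivity)
      (tanh_eq_sinh_div_cosh t ▸ div_nonneg (sinh_nonneg_iff.2 ht.le) hct.le)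
  have h₂ := (hasDerivAt_sinh x).arcsin_div (c := sinh t) <|
    abs_lt_of_sq_lt_sq (by rw [← sub_pos, hsinh]; positivity) (sinh_nonneg_iff.2 ht.le)
  rw [htanh, sqrt_sq hq.le] at h₁
  rw [hsinh, sqrt_sq (by positivity)] at h₂
  refine (h₁.sub (h₂.const_mul _)).congr_deriv ?_
  field_simp
  rw [hq2]
  field_simp

theorem integral_sqrt_inv_cosh_sq_sub_inv_cosh_sq {t : ℝ} (ht : 0 < t) :
    ∫ s in (0 : ℝ)..t, √((cosh s)⁻¹ ^ 2 - (cosh t)⁻¹ ^ 2) = π / 2 * (1 - (cosh t)⁻¹) := by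
  have hcont : Continuous fun s => √((cosh s)⁻¹ ^ 2 - (cosh t)⁻¹ ^ 2) := by
    fun_prop (disch := exact fun s => (cosh_pos s).ne')
  rw [intervalIntegral.integral_eq_sub_of_hasDeriv_right_of_le ht.le
    (continuous_sechPhasePrimitive t).continuousOn
    (fun x hx => (hasDerivAt_sechPhasePrimitive hx.1 hx.2).hasDerivWithinAt)
    (hcont.intervalIntegrable _ _), sechPhasePrimitive_self ht, sechPhasePrimitive_zero, sub_zero]

theorem wkb_phase_sech_profile_general
    (A v xp : ℝ) (hA : 0 < A)
    (hxp_pos : 0 < xp) (hxp : 4 * A * (1 / Real.cosh xp) = v) :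
    (1 / 2) * ∫ s in (0 : ℝ)..xp, Real.sqrt (16 * A ^ 2 * (1 / Real.cosh s) ^ 2 - v ^ 2)
      = Real.pi * A - Real.pi * v / 4 := by
  subst hxp
  have hintegrand : ∀ s, √(16 * A ^ 2 * (1 / cosh s) ^ 2 - (4 * A * (1 / cosh xp)) ^ 2)
      = 4 * A * √((cosh s)⁻¹ ^ 2 - (cosh xp)⁻¹ ^ 2) := fun s => by
    rw [show 16 * A ^ 2 * (1 / cosh s) ^ 2 - (4 * A * (1 / cosh xp)) ^ 2
        = (4 * A) ^ 2 * ((cosh s)⁻¹ ^ 2 - (cosh xp)⁻¹ ^ 2) by ring,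
      sqrt_mul (sq_nonneg _), sqrt_sq (by positivity)]
  simp_rw [hintegrand, intervalIntegral.integral_const_mul,
    integral_sqrt_inv_cosh_sq_sub_inv_cosh_sq hxp_pos]
  ring

/-- **Closed form of the WKB phase integral for the Satsuma–Yajima profile.**
For `G(x) = −4A sech(x)` with `A > 0` and `0 < v < 4A`, letting `xp = arccosh(4A/v)` be the
unique positive solution of `4A·sech(xp) = v`, one has
`(1/2)∫₀^{xp} √(16A² sech(s)² − v²) ds = πA − πv/4`. -/
theorem wkb_phase_sech_profile
    (A v xp : ℝ) (hA : 0 < A) (hv₀ : 0 < v) (hv₁ : v < 4 * A)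
    (hxp_pos : 0 < xp) (hxp : 4 * A * (1 / Real.cosh xp) = v) :
    (1 / 2) * ∫ s in (0 : ℝ)..xp, Real.sqrt (16 * A ^ 2 * (1 / Real.cosh s) ^ 2 - v ^ 2)
      = Real.pi * A - Real.pi * v / 4 :=
  wkb_phase_sech_profile_general A v xp hA hxp_pos hxp
end

section
/- Let j, j', j'', n_p be real numbers with j' ≠ 0, n_p² ≠ 1, and 𝒩 := n_p²·j·j'' + (j')² ≠ 0. Let A be the 2×2 real matrix A := (1/𝒩)·[[n_p·(j·j'' + (j')²), −(1−n_p²)²·j'·j''], [j·j', n_p·(j·j'' + (j')²)]]. Then: (i) for every real c, det(c·I − A) = ((𝒩·c − n_p·(j·j'' + (j')²))² + (1−n_p²)²·j·(j')²·j'')/𝒩², so the eigenvalues of A are exactly the roots of the quadratic (n_p·(j·j''+(j')²) − 𝒩·c)² + (1−n_p²)²·j·(j')²·j'' = 0; and (ii) A has two distinct real eigenvalues if and only if j·j'' < 0. -/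
open Matrix

/-! The coefficient matrix has equal diagonal entries, so `det (c • 1 - A)` is a shifted square
minus the product of the off-diagonal entries; its two real roots are distinct exactly when the
constant term `(1 - np²)² j j'² j''` is negative, and this term has the sign of `j j''`. -/

theorem Matrix.det_smul_one_sub_inv_smul {K n : Type*} [Field K] [Fintype n] [DecidableEq n]
    {N : K} (hN : N ≠ 0) (c : K) (M : Matrix n n K) :
    (c • (1 : Matrix n n K) - N⁻¹ • M).det = N⁻¹ ^ Fintype.card n * ((N * c) • 1 - M).det := by
  rw [← det_smul, smul_sub, smul_smul, inv_mul_cancel_left₀ hN]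

theorem Matrix.det_fin_two_smul_one_sub_of_diag_eq {R : Type*} [CommRing R] (c a b d : R) :
    (c • (1 : Matrix (Fin 2) (Fin 2) R) - !![a, b; d, a]).det = (c - a) ^ 2 - b * d := by
  simp [det_fin_two]
  ring

theorem Real.exists_ne_roots_sub_mul_sq_add_iff {a N K : ℝ} (hN : N ≠ 0) :
    (∃ c₀ c₁ : ℝ, c₀ ≠ c₁ ∧ (a - N * c₀) ^ 2 + K = 0 ∧ (a - N * c₁) ^ 2 + K = 0) ↔ K < 0 := by
  constructor
  · rintro ⟨c₀, c₁, hne, h₀, h₁⟩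
    by_contra! hK
    have hc₀ : a - N * c₀ = 0 := pow_eq_zero_iff two_ne_zero |>.mp (by nlinarith)
    have hc₁ : a - N * c₁ = 0 := pow_eq_zero_iff two_ne_zero |>.mp (by nlinarith)
    exact hne (mul_left_cancel₀ hN (by linarith))
  · intro hK
    set s := √(-K)
    have hs : s ^ 2 = -K := Real.sq_sqrt (by linarith)
    have hs_pos : 0 < s := Real.sqrt_pos.mpr (by linarith)
    refine ⟨(a - s) / N, (a + s) / N, ?_, ?_, ?_⟩
    · rw [Ne, div_left_inj' hN]
      linarith
    · rw [mul_div_cancel₀ _ hN]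
      linarith
    · rw [mul_div_cancel₀ _ hN]
      linarith

theorem whitham_matrix_eigenvalues_general
    (j j' j'' np N : ℝ)
    (hj' : j' ≠ 0) (hnp : np ^ 2 ≠ 1)
    (hN : N ≠ 0)
    (A : Matrix (Fin 2) (Fin 2) ℝ)
    (hA : A = N⁻¹ •
      !![np * (j * j'' + j' ^ 2), -((1 - np ^ 2) ^ 2 * j' * j'');
         j * j', np * (j * j'' + j' ^ 2)]) :
    (∀ c : ℝ,
      (c • (1 : Matrix (Fin 2) (Fin 2) ℝ) - A).det
        = ((N * c - np * (j * j'' + j' ^ 2)) ^ 2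
            + (1 - np ^ 2) ^ 2 * j * j' ^ 2 * j'') / N ^ 2) ∧
    (∀ c : ℝ,
      (c • (1 : Matrix (Fin 2) (Fin 2) ℝ) - A).det = 0 ↔
        (np * (j * j'' + j' ^ 2) - N * c) ^ 2
          + (1 - np ^ 2) ^ 2 * j * j' ^ 2 * j'' = 0) ∧
    ((∃ c₀ c₁ : ℝ, c₀ ≠ c₁ ∧
        (c₀ • (1 : Matrix (Fin 2) (Fin 2) ℝ) - A).det = 0 ∧
        (c₁ • (1 : Matrix (Fin 2) (Fin 2) ℝ) - A).det = 0) ↔ j * j'' < 0) := by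
  have hdet : ∀ c : ℝ, (c • (1 : Matrix (Fin 2) (Fin 2) ℝ) - A).det
      = ((N * c - np * (j * j'' + j' ^ 2)) ^ 2 + (1 - np ^ 2) ^ 2 * j * j' ^ 2 * j'') / N ^ 2 := by
    intro c
    rw [hA, det_smul_one_sub_inv_smul hN, det_fin_two_smul_one_sub_of_diag_eq, Fintype.card_fin]
    field_simp
    ring
  have hroot : ∀ c : ℝ, (c • (1 : Matrix (Fin 2) (Fin 2) ℝ) - A).det = 0 ↔
      (np * (j * j'' + j' ^ 2) - N * c) ^ 2 + (1 - np ^ 2) ^ 2 * j * j' ^ 2 * j'' = 0 := by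
    intro c
    rw [hdet, div_eq_zero_iff, or_iff_left (pow_ne_zero 2 hN), sub_sq_comm]
  have hsign : (1 - np ^ 2) ^ 2 * j * j' ^ 2 * j'' < 0 ↔ j * j'' < 0 := by
    have hpos : 0 < ((1 - np ^ 2) * j') ^ 2 :=
      sq_pos_of_ne_zero (mul_ne_zero (sub_ne_zero.mpr (Ne.symm hnp)) hj')
    rw [show (1 - np ^ 2) ^ 2 * j * j' ^ 2 * j'' = ((1 - np ^ 2) * j') ^ 2 * (j * j'') by ring]
    exact smul_neg_iff_of_pos_left hpos
  refine ⟨hdet, hroot, ?_⟩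
  simp only [hroot]
  exact (Real.exists_ne_roots_sub_mul_sq_add_iff hN).trans hsign

/-- **Characteristic polynomial and hyperbolicity criterion for the Whitham system.**
With `j = J(ℰ)`, `j' = J'(ℰ)`, `j'' = J''(ℰ)`, `np` the reciprocal phase velocity, and
`𝒩 = np²·j·j'' + j'²`, the coefficient matrix `A` of the Whitham modulation system
satisfies: (i) for every real `c`,
`det(c·I − A) = ((𝒩c − np(jj''+j'²))² + (1−np²)²·j·j'²·j'')/𝒩²`, so the eigenvalues of `A`
are exactly the real roots of `(np(jj''+j'²) − 𝒩c)² + (1−np²)²·j·j'²·j'' = 0`; and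
(ii) `A` has two distinct real eigenvalues if and only if `j·j'' < 0`. -/
theorem whitham_matrix_eigenvalues
    (j j' j'' np N : ℝ)
    (hj' : j' ≠ 0) (hnp : np ^ 2 ≠ 1)
    (hN_def : N = np ^ 2 * j * j'' + j' ^ 2) (hN : N ≠ 0)
    (A : Matrix (Fin 2) (Fin 2) ℝ)
    (hA : A = N⁻¹ •
      !![np * (j * j'' + j' ^ 2), -((1 - np ^ 2) ^ 2 * j' * j'');
         j * j', np * (j * j'' + j' ^ 2)]) :
    (∀ c : ℝ,
      (c • (1 : Matrix (Fin 2) (Fin 2) ℝ) - A).det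
        = ((N * c - np * (j * j'' + j' ^ 2)) ^ 2
            + (1 - np ^ 2) ^ 2 * j * j' ^ 2 * j'') / N ^ 2) ∧
    (∀ c : ℝ,
      (c • (1 : Matrix (Fin 2) (Fin 2) ℝ) - A).det = 0 ↔
        (np * (j * j'' + j' ^ 2) - N * c) ^ 2
          + (1 - np ^ 2) ^ 2 * j * j' ^ 2 * j'' = 0) ∧
    ((∃ c₀ c₁ : ℝ, c₀ ≠ c₁ ∧
        (c₀ • (1 : Matrix (Fin 2) (Fin 2) ℝ) - A).det = 0 ∧
        (c₁ • (1 : Matrix (Fin 2) (Fin 2) ℝ) - A).det = 0) ↔ j * j'' < 0) :=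
  whitham_matrix_eigenvalues_general j j' j'' np N hj' hnp hN A hA
end

section
/- Let w₀ and w₁ be distinct negative real numbers, set r := √(w₀·w₁) > 0, ℰ := −(w₀+w₁)/(2r) and n_p := (1−r)/(1+r), and let j, j' be real numbers with j'' := j/(4·(1−ℰ²)) and 𝒩 := n_p²·j·j'' + (j')² ≠ 0. Let A := (1/𝒩)·[[n_p·(j·j''+(j')²), −(1−n_p²)²·j'·j''], [j·j', n_p·(j·j''+(j')²)]]. For j ∈ {0,1}, define the vector v_j := (−w_{1−j}/((1+r)²·r), (w_{1−j}−w_j)/(4·w_j·r)) and the scalar c_j := [r·(1+r)·j + (w_j−w_{1−j})·(1−r)·j'] / [r·(1−r)·j + (w_j−w_{1−j})·(1+r)·j'], assuming the latter denominator is nonzero. Then A·v_j = c_j·v_j for j = 0 and j = 1; that is, w₀ and w₁ are Riemann invariants diagonalizing the Whitham system, with characteristic velocities c₀ and c₁. -/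
/-!
Write `a = w k`, `b = w (1 - k)`, so that `r² = ab`. Then `1 - ℰ² = -(a - b)² / (4r²)`, hence
`J'' = -r²J / (a - b)²`, and the normalisation factors as
`𝒩 = D₊ D₋ / ((1 + r)² (a - b)²)` with `D± = (a - b)(1 + r)J' ± r(1 - r)J`.
Applied to the Jacobian column, `𝒩 • A` acts as multiplication by `D₋ (r(1 + r)J + (a - b)(1 - r)J')`
divided by the same denominator, a polynomial identity modulo `r² = ab`. Dividing by `𝒩` cancels
`D₋` and leaves `c k`, whose denominator is `D₊`.
-/

open Matrix

/-- `𝒩 • A`, the Whitham coefficient matrix with its normalisation cleared. -/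
noncomputable def whithamNumMatrix (np J J' J'' : ℝ) : Matrix (Fin 2) (Fin 2) ℝ :=
  !![np * (J * J'' + J' ^ 2), -((1 - np ^ 2) ^ 2 * J' * J''); J * J', np * (J * J'' + J' ^ 2)]

noncomputable def jacobianColumn (r a b : ℝ) : Fin 2 → ℝ :=
  ![-b / ((1 + r) ^ 2 * r), (b - a) / (4 * a * r)]

noncomputable def characteristicVelocity (r a b J J' : ℝ) : ℝ :=
  (r * (1 + r) * J + (a - b) * (1 - r) * J') / (r * (1 - r) * J + (a - b) * (1 + r) * J')

section
variable {a b r J J' : ℝ}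

lemma one_sub_sq_neg_add_div_two_mul (hr : r ^ 2 = a * b) (hr0 : r ≠ 0) :
    1 - (-(a + b) / (2 * r)) ^ 2 = -(a - b) ^ 2 / (4 * r ^ 2) := by
  field_simp
  linear_combination 16 * hr

lemma whitham_normalization_factorization (h1r : 1 + r ≠ 0) (hab : a ≠ b) :
    ((1 - r) / (1 + r)) ^ 2 * J * (-(J * r ^ 2) / (a - b) ^ 2) + J' ^ 2
      = (r * (1 - r) * J + (a - b) * (1 + r) * J') * ((a - b) * (1 + r) * J' - r * (1 - r) * J)
          / ((1 + r) ^ 2 * (a - b) ^ 2) := by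
  have : a - b ≠ 0 := sub_ne_zero.mpr hab
  field_simp
  ring

lemma whithamNumMatrix_mulVec_jacobianColumn (hr : r ^ 2 = a * b) (hr0 : 0 < r) (ha : a ≠ 0)
    (hab : a ≠ b) :
    whithamNumMatrix ((1 - r) / (1 + r)) J J' (-(J * r ^ 2) / (a - b) ^ 2) *ᵥ jacobianColumn r a b
      = (((a - b) * (1 + r) * J' - r * (1 - r) * J) * (r * (1 + r) * J + (a - b) * (1 - r) * J')
          / ((1 + r) ^ 2 * (a - b) ^ 2)) • jacobianColumn r a b := by
  have : a - b ≠ 0 := sub_ne_zero.mpr hab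
  have : r ≠ 0 := hr0.ne'
  have : 1 + r ≠ 0 := by positivity
  simp only [whithamNumMatrix, jacobianColumn, mulVec_fin_two, smul_vec2, of_apply, cons_val',
    cons_val_zero, cons_val_one, cons_val_fin_one, smul_eq_mul]
  refine vec2_eq ?_ ?_
  · field_simp
    linear_combination -16 * r ^ 2 * J * J' * (a - b) * hr
  · field_simp
    linear_combination 4 * J * J' * (a - b) ^ 2 * hr

theorem whitham_mulVec_jacobianColumn {E np J'' N : ℝ} (hr : r ^ 2 = a * b) (hr0 : 0 < r)
    (ha : a ≠ 0) (hab : a ≠ b) (hE : E = -(a + b) / (2 * r)) (hnp : np = (1 - r) / (1 + r))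
    (hJ'' : J'' = J / (4 * (1 - E ^ 2))) (hN_def : N = np ^ 2 * J * J'' + J' ^ 2) (hN : N ≠ 0) :
    (N⁻¹ • whithamNumMatrix np J J' J'') *ᵥ jacobianColumn r a b
      = characteristicVelocity r a b J J' • jacobianColumn r a b := by
  have hab' : a - b ≠ 0 := sub_ne_zero.mpr hab
  have h1r : 1 + r ≠ 0 := by positivity
  replace hJ'' : J'' = -(J * r ^ 2) / (a - b) ^ 2 := by
    rw [hJ'', hE, one_sub_sq_neg_add_div_two_mul hr hr0.ne']
    field_simp
  subst hnp hJ'' hN_def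
  rw [whitham_normalization_factorization h1r hab] at hN ⊢
  obtain ⟨hplus, hminus⟩ := mul_ne_zero_iff.mp (div_ne_zero_iff.mp hN).1
  rw [smul_mulVec, whithamNumMatrix_mulVec_jacobianColumn hr hr0 ha hab, smul_smul,
    characteristicVelocity]
  congr 1
  field_simp
end

theorem whitham_riemann_invariants_general
    (w : Fin 2 → ℝ) (hw_ne : w 0 ≠ w 1) (hw0 : w 0 < 0) (hw1 : w 1 < 0)
    (J J' r E np J'' N : ℝ)
    (hr : r = Real.sqrt (w 0 * w 1))
    (hE : E = -(w 0 + w 1) / (2 * r))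
    (hnp : np = (1 - r) / (1 + r))
    (hJ'' : J'' = J / (4 * (1 - E ^ 2)))
    (hN_def : N = np ^ 2 * J * J'' + J' ^ 2) (hN : N ≠ 0)
    (A : Matrix (Fin 2) (Fin 2) ℝ)
    (hA : A = N⁻¹ •
      !![np * (J * J'' + J' ^ 2), -((1 - np ^ 2) ^ 2 * J' * J'');
         J * J', np * (J * J'' + J' ^ 2)])
    (v : Fin 2 → Fin 2 → ℝ)
    (hv : ∀ k : Fin 2,
      v k = ![-(w (1 - k)) / ((1 + r) ^ 2 * r), (w (1 - k) - w k) / (4 * w k * r)])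
    (c : Fin 2 → ℝ)
    (hc : ∀ k : Fin 2,
      c k = (r * (1 + r) * J + (w k - w (1 - k)) * (1 - r) * J')
              / (r * (1 - r) * J + (w k - w (1 - k)) * (1 + r) * J')) :
    ∀ k : Fin 2, A.mulVec (v k) = c k • v k := by
  have hw01 : 0 < w 0 * w 1 := mul_pos_of_neg_of_neg hw0 hw1
  have hr0 : 0 < r := hr ▸ Real.sqrt_pos.mpr hw01
  have hr2 : r ^ 2 = w 0 * w 1 := by rw [hr, Real.sq_sqrt hw01.le]
  intro k
  obtain ⟨hmul, hadd, hne, hneg⟩ : w k * w (1 - k) = w 0 * w 1 ∧ w k + w (1 - k) = w 0 + w 1 ∧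
      w k ≠ w (1 - k) ∧ w k < 0 := by
    fin_cases k
    · simp [hw_ne, hw0]
    · simp [mul_comm, add_comm, hw_ne.symm, hw1]
  rw [hA, hv k, hc k]
  exact whitham_mulVec_jacobianColumn (hr2.trans hmul.symm) hr0 hneg.ne hne (hadd ▸ hE) hnp hJ''
    hN_def hN

/-- **Riemann invariants diagonalize the Whitham system.**
Let `w 0 ≠ w 1` be negative reals, `r = √(w₀w₁)`, `ℰ = −(w₀+w₁)/(2r)`,
`np = (1−r)/(1+r)`, and let `J, J'` be reals with `J'' = J/(4(1−ℰ²))` and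
`𝒩 = np²JJ'' + J'² ≠ 0`.  Then the columns `v k` of the Jacobian of
`(w₀,w₁) ↦ (np,ℰ)` are eigenvectors of the Whitham coefficient matrix `A`
with the eigenvalues (characteristic velocities)
`c k = (r(1+r)J + (w_k−w_{1−k})(1−r)J')/(r(1−r)J + (w_k−w_{1−k})(1+r)J')`. -/
theorem whitham_riemann_invariants
    (w : Fin 2 → ℝ) (hw_ne : w 0 ≠ w 1) (hw0 : w 0 < 0) (hw1 : w 1 < 0)
    (J J' r E np J'' N : ℝ)
    (hr : r = Real.sqrt (w 0 * w 1))
    (hE : E = -(w 0 + w 1) / (2 * r))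
    (hnp : np = (1 - r) / (1 + r))
    (hJ'' : J'' = J / (4 * (1 - E ^ 2)))
    (hN_def : N = np ^ 2 * J * J'' + J' ^ 2) (hN : N ≠ 0)
    (A : Matrix (Fin 2) (Fin 2) ℝ)
    (hA : A = N⁻¹ •
      !![np * (J * J'' + J' ^ 2), -((1 - np ^ 2) ^ 2 * J' * J'');
         J * J', np * (J * J'' + J' ^ 2)])
    (v : Fin 2 → Fin 2 → ℝ)
    (hv : ∀ k : Fin 2,
      v k = ![-(w (1 - k)) / ((1 + r) ^ 2 * r), (w (1 - k) - w k) / (4 * w k * r)])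
    (c : Fin 2 → ℝ)
    (hden : ∀ k : Fin 2, r * (1 - r) * J + (w k - w (1 - k)) * (1 + r) * J' ≠ 0)
    (hc : ∀ k : Fin 2,
      c k = (r * (1 + r) * J + (w k - w (1 - k)) * (1 - r) * J')
              / (r * (1 - r) * J + (w k - w (1 - k)) * (1 + r) * J')) :
    ∀ k : Fin 2, A.mulVec (v k) = c k • v k :=
  whitham_riemann_invariants_general w hw_ne hw0 hw1 J J' r E np J'' N hr hE hnp hJ'' hN_def hN A hA
    v hv c hc
end

section
/- For every m with 0 < m < 1, the improper integral identity ∫_{s=0}^{1} [√(1−m·s²) − (1−s²)] / (s²·√(1−s²)·√(1−m·s²)) ds = E(m) holds, where the integrand is continuous on (0,1) and integrable at both endpoints. -/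
/-!
On `(0, 1)` the integrand differs from the integrand `√(1 - m s²) / √(1 - s²)` of `E(m)` by the
derivative of `F(s) = -m s √(1 - s²) / (1 + √(1 - m s²))`, which vanishes at `s = 0` and `s = 1`;
so the two integrals agree. Both integrands lie between `0` and `1 / (√(1 - s²) √(1 - m s²))`,
which is at most `(1 - m)^{-1/2} / √(1 - s²) = (1 - m)^{-1/2} arcsin' s`, hence integrable.
-/

open MeasureTheory Real

noncomputable def ellipticE (m : ℝ) : ℝ :=
  ∫ s in (0 : ℝ)..1, Real.sqrt (1 - m * s ^ 2) / Real.sqrt (1 - s ^ 2)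

open Set intervalIntegral

theorem IntervalIntegrable.of_continuousOn_Ioo_of_norm_le {E : Type*} [NormedAddCommGroup E]
    {f : ℝ → E} {g : ℝ → ℝ} {a b : ℝ} (hab : a ≤ b) (hg : IntervalIntegrable g volume a b)
    (hf : ContinuousOn f (Ioo a b)) (hle : ∀ x ∈ Ioo a b, ‖f x‖ ≤ g x) :
    IntervalIntegrable f volume a b := by
  rw [intervalIntegrable_iff_integrableOn_Ioo_of_le hab] at hg ⊢
  exact hg.mono' (hf.aestronglyMeasurable measurableSet_Ioo)
    ((ae_restrict_iff' measurableSet_Ioo).2 (.of_forall hle))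

theorem intervalIntegrable_one_div_sqrt_one_sub_sq {a b : ℝ} (ha : a ∈ Icc (-1) 1)
    (hb : b ∈ Icc (-1) 1) : IntervalIntegrable (fun x => 1 / √(1 - x ^ 2)) volume a b := by
  refine intervalIntegrable_deriv_of_nonneg continuous_arcsin.continuousOn
    (fun x hx => hasDerivAt_arcsin ?_ ?_) (fun x _ => by positivity)
  · exact ((le_min ha.1 hb.1).trans_lt hx.1).ne'
  · exact (hx.2.trans_le (max_le ha.2 hb.2)).ne

noncomputable def ellipticEIntegrand (m s : ℝ) : ℝ :=
  √(1 - m * s ^ 2) / √(1 - s ^ 2)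

noncomputable def ellipticEIntegrand' (m s : ℝ) : ℝ :=
  (√(1 - m * s ^ 2) - (1 - s ^ 2)) / (s ^ 2 * √(1 - s ^ 2) * √(1 - m * s ^ 2))

noncomputable def ellipticECorrection (m s : ℝ) : ℝ :=
  -(m * s * √(1 - s ^ 2)) / (1 + √(1 - m * s ^ 2))

section

variable {m s : ℝ}

theorem continuousOn_ellipticEIntegrand (m : ℝ) :
    ContinuousOn (ellipticEIntegrand m) (Ioo (-1) 1) := by
  refine ContinuousOn.div (by fun_prop) (by fun_prop) fun s hs => ?_
  have : 0 < 1 - s ^ 2 := by nlinarith [hs.1, hs.2]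
  positivity

theorem continuousOn_ellipticEIntegrand' (hm : m ≤ 1) :
    ContinuousOn (ellipticEIntegrand' m) (Ioo 0 1) := by
  refine ContinuousOn.div (by fun_prop) (by fun_prop) fun s hs => ?_
  have hs₀ : 0 < s := hs.1
  have : 0 < 1 - s ^ 2 := by nlinarith [hs.1, hs.2]
  have : 0 < 1 - m * s ^ 2 := by nlinarith [hs.1, hs.2]
  positivity

theorem one_sub_sq_le_sqrt_one_sub_mul_sq (hm : m ≤ 1) (hs : s ^ 2 ≤ 1) :
    1 - s ^ 2 ≤ √(1 - m * s ^ 2) := by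
  apply Real.le_sqrt_of_sq_le
  nlinarith

theorem norm_ellipticEIntegrand_le (hm₀ : 0 ≤ m) (hm₁ : m ≤ 1) (hs : s ^ 2 < 1) :
    ‖ellipticEIntegrand m s‖ ≤ 1 / (√(1 - s ^ 2) * √(1 - m * s ^ 2)) := by
  have hv' : 0 < 1 - m * s ^ 2 := by nlinarith
  have hu : 0 < √(1 - s ^ 2) := Real.sqrt_pos.2 (by linarith)
  have hv : 0 < √(1 - m * s ^ 2) := Real.sqrt_pos.2 hv'
  rw [Real.norm_of_nonneg (by unfold ellipticEIntegrand; positivity)]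
  calc ellipticEIntegrand m s
      = √(1 - m * s ^ 2) ^ 2 / (√(1 - s ^ 2) * √(1 - m * s ^ 2)) := by
        unfold ellipticEIntegrand; field_simp
    _ ≤ 1 / (√(1 - s ^ 2) * √(1 - m * s ^ 2)) := by
        gcongr
        rw [Real.sq_sqrt hv'.le]
        nlinarith

theorem norm_ellipticEIntegrand'_le (hm₀ : 0 ≤ m) (hm₁ : m ≤ 1) (hs₀ : s ≠ 0) (hs : s ^ 2 < 1) :
    ‖ellipticEIntegrand' m s‖ ≤ 1 / (√(1 - s ^ 2) * √(1 - m * s ^ 2)) := by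
  have hu : 0 < √(1 - s ^ 2) := Real.sqrt_pos.2 (by linarith)
  have hv : 0 < √(1 - m * s ^ 2) := Real.sqrt_pos.2 (by nlinarith)
  have hnum := one_sub_sq_le_sqrt_one_sub_mul_sq hm₁ hs.le
  rw [Real.norm_of_nonneg (by unfold ellipticEIntegrand'; bound)]
  calc ellipticEIntegrand' m s
      ≤ s ^ 2 / (s ^ 2 * √(1 - s ^ 2) * √(1 - m * s ^ 2)) := by
        unfold ellipticEIntegrand'
        gcongr
        have : √(1 - m * s ^ 2) ≤ 1 := Real.sqrt_le_one.2 (by nlinarith)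
        linarith
    _ = 1 / (√(1 - s ^ 2) * √(1 - m * s ^ 2)) := by
        field_simp

theorem one_div_sqrt_mul_sqrt_le (hm₀ : 0 ≤ m) (hm₁ : m < 1) (hs : s ^ 2 ≤ 1) :
    1 / (√(1 - s ^ 2) * √(1 - m * s ^ 2)) ≤ (√(1 - m))⁻¹ * (1 / √(1 - s ^ 2)) := by
  have hc : 0 < √(1 - m) := Real.sqrt_pos.2 (by linarith)
  calc 1 / (√(1 - s ^ 2) * √(1 - m * s ^ 2)) = (√(1 - m * s ^ 2))⁻¹ * (1 / √(1 - s ^ 2)) := by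
        ring
    _ ≤ (√(1 - m))⁻¹ * (1 / √(1 - s ^ 2)) := by
        gcongr
        nlinarith

theorem continuous_ellipticECorrection (m : ℝ) : Continuous (ellipticECorrection m) :=
  Continuous.div (by fun_prop) (by fun_prop) fun _ => by positivity

theorem hasDerivAt_ellipticECorrection (hs : s ≠ 0) (hu : 0 < 1 - s ^ 2)
    (hv : 0 < 1 - m * s ^ 2) :
    HasDerivAt (ellipticECorrection m)
      (ellipticEIntegrand' m s - ellipticEIntegrand m s) s := by
  have du : HasDerivAt (fun x => √(1 - x ^ 2)) (-(2 * s) / (2 * √(1 - s ^ 2))) s := by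
    simpa using ((hasDerivAt_pow 2 s).const_sub 1).sqrt hu.ne'
  have dv : HasDerivAt (fun x => √(1 - m * x ^ 2)) (-(m * (2 * s)) / (2 * √(1 - m * s ^ 2))) s := by
    simpa [mul_comm] using (((hasDerivAt_pow 2 s).const_mul m).const_sub 1).sqrt hv.ne'
  have hden : 1 + √(1 - m * s ^ 2) ≠ 0 := by positivity
  have hF : HasDerivAt (ellipticECorrection m) _ s :=
    (((hasDerivAt_id s).const_mul m).mul du).neg.div (dv.const_add 1) hden
  convert hF using 1
  have hu2 := Real.sq_sqrt hu.le
  have hv2 := Real.sq_sqrt hv.le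
  simp only [ellipticEIntegrand', ellipticEIntegrand, Pi.neg_apply, Pi.mul_apply, id]
  set u := √(1 - s ^ 2)
  set v := √(1 - m * s ^ 2)
  have : 0 < u := Real.sqrt_pos.2 hu
  have : 0 < v := Real.sqrt_pos.2 hv
  field_simp
  linear_combination (v * s ^ 2 * m + v ^ 2 * s ^ 2 * m + s ^ 4 * m ^ 2) * hu2
    + (1 + v - 2 * v * s ^ 2 - v ^ 2 * s ^ 2 - s ^ 2 + s ^ 2 * m - s ^ 4 * m) * hv2

theorem intervalIntegrable_of_norm_le_one_div_sqrt_mul_sqrt (hm₀ : 0 ≤ m) (hm₁ : m < 1)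
    {f : ℝ → ℝ} (hf : ContinuousOn f (Ioo 0 1))
    (hle : ∀ s ∈ Ioo (0 : ℝ) 1, ‖f s‖ ≤ 1 / (√(1 - s ^ 2) * √(1 - m * s ^ 2))) :
    IntervalIntegrable f volume 0 1 := by
  refine ((intervalIntegrable_one_div_sqrt_one_sub_sq (by norm_num) (by norm_num)).const_mul
    (√(1 - m))⁻¹).of_continuousOn_Ioo_of_norm_le zero_le_one hf fun s hs => ?_
  exact (hle s hs).trans (one_div_sqrt_mul_sqrt_le hm₀ hm₁ (pow_le_one₀ hs.1.le hs.2.le))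

theorem intervalIntegrable_ellipticEIntegrand (hm₀ : 0 ≤ m) (hm₁ : m < 1) :
    IntervalIntegrable (ellipticEIntegrand m) volume 0 1 :=
  intervalIntegrable_of_norm_le_one_div_sqrt_mul_sqrt hm₀ hm₁
    ((continuousOn_ellipticEIntegrand m).mono (Ioo_subset_Ioo_left (by norm_num)))
    fun _ hs => norm_ellipticEIntegrand_le hm₀ hm₁.le (pow_lt_one₀ hs.1.le hs.2 two_ne_zero)

theorem intervalIntegrable_ellipticEIntegrand' (hm₀ : 0 ≤ m) (hm₁ : m < 1) :
    IntervalIntegrable (ellipticEIntegrand' m) volume 0 1 :=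
  intervalIntegrable_of_norm_le_one_div_sqrt_mul_sqrt hm₀ hm₁
    (continuousOn_ellipticEIntegrand' hm₁.le) fun _ hs =>
    norm_ellipticEIntegrand'_le hm₀ hm₁.le hs.1.ne' (pow_lt_one₀ hs.1.le hs.2 two_ne_zero)

end

/-- **An improper integral identity for `E(m)`.** For `0 < m < 1`, the integrand
`(√(1−m s²) − (1−s²))/(s²√(1−s²)√(1−m s²))` is continuous on `(0,1)`, integrable at both
endpoints, and integrates over `(0,1)` to `E(m)`. -/
theorem integral_eq_ellipticE (m : ℝ) (hm₀ : 0 < m) (hm₁ : m < 1) :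
    ContinuousOn
      (fun s : ℝ => (Real.sqrt (1 - m * s ^ 2) - (1 - s ^ 2))
        / (s ^ 2 * Real.sqrt (1 - s ^ 2) * Real.sqrt (1 - m * s ^ 2)))
      (Set.Ioo 0 1) ∧
    IntervalIntegrable
      (fun s : ℝ => (Real.sqrt (1 - m * s ^ 2) - (1 - s ^ 2))
        / (s ^ 2 * Real.sqrt (1 - s ^ 2) * Real.sqrt (1 - m * s ^ 2)))
      volume 0 1 ∧
    ∫ s in (0 : ℝ)..1,
        (Real.sqrt (1 - m * s ^ 2) - (1 - s ^ 2))
          / (s ^ 2 * Real.sqrt (1 - s ^ 2) * Real.sqrt (1 - m * s ^ 2))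
      = ellipticE m := by
  have hint' := intervalIntegrable_ellipticEIntegrand' hm₀.le hm₁
  have hint := intervalIntegrable_ellipticEIntegrand hm₀.le hm₁
  refine ⟨continuousOn_ellipticEIntegrand' hm₁.le, hint', ?_⟩
  have hFTC := integral_eq_sub_of_hasDerivAt_of_le zero_le_one
    (continuous_ellipticECorrection m).continuousOn
    (fun s hs => hasDerivAt_ellipticECorrection hs.1.ne' (by nlinarith [hs.1, hs.2])
      (by nlinarith [hs.1, hs.2])) (hint'.sub hint)
  rw [integral_sub hint' hint] at hFTC
  norm_num [ellipticECorrection] at hFTC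
  exact sub_eq_zero.1 hFTC
end

section
/- Let w₀ < w₁ < 0 be real numbers and set m := 4·√(w₀·w₁)/(√(−w₀) + √(−w₁))², which satisfies 0 < m < 1. Then ∫_{w=w₀}^{w₁} dw / √(w·(w−w₀)·(w−w₁)) = 4·K(1−m)/(√(−w₀) + √(−w₁)). -/
/-!
Substituting `w = -t` and writing `w₁ = -α²`, `w₀ = -β²` turns the integral into
`∫_{α²}^{β²} dt / √(t (t - α²) (β² - t))`, and `1 - m = k²` with `k = (β - α)/(β + α)`.
The quadratic (Landen) substitution `s² = (t - α²)(β² - t) / ((β - α)² t)`, equivalently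
`t + α²β²/t = α² + β² - (β - α)² s²`, folds `(α², β²)` at `t = αβ` and maps each of the two halves
bijectively onto `(0, 1)`. On each half it turns `dt / √(t (t - α²) (β² - t))` into
`2/(α + β) · ds / (√(1 - s²) √(1 - k² s²))`, since
`(1 - s²)(1 - k² s²) = ((t² - α²β²) / ((β - α)(β + α) t))²`.
-/

open MeasureTheory Real

/-- The complete elliptic integral of the first kind,
`K(m) = ∫₀¹ ds/(√(1−s²)·√(1−m s²))`. -/
noncomputable def ellipticK (m : ℝ) : ℝ :=
  ∫ s in (0 : ℝ)..1, 1 / (Real.sqrt (1 - s ^ 2) * Real.sqrt (1 - m * s ^ 2))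

open Set

noncomputable def ellipticIntegrand (m s : ℝ) : ℝ := 1 / (√(1 - s ^ 2) * √(1 - m * s ^ 2))

lemma ellipticK_eq_integral_Ioo (m : ℝ) :
    ellipticK m = ∫ s in Ioo 0 1, ellipticIntegrand m s := by
  rw [ellipticK, intervalIntegral.integral_of_le zero_le_one, integral_Ioc_eq_integral_Ioo]
  rfl

lemma integrableOn_ellipticIntegrand {m : ℝ} (hm : m < 1) :
    IntegrableOn (ellipticIntegrand m) (Ioo 0 1) := by
  -- domination by `(1 - s) ^ (-1/2) / √c`, using `1 - s ≤ 1 - s²` and `c ≤ 1 - m s²`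
  set c := min 1 (1 - m)
  have hc : 0 < c := lt_min one_pos (sub_pos.2 hm)
  have hsing : IntegrableOn (fun s : ℝ => (1 - s) ^ (-(1 / 2) : ℝ)) (Ioo 0 1) := by
    rw [← intervalIntegrable_iff_integrableOn_Ioo_of_le zero_le_one]
    simpa using (intervalIntegral.intervalIntegrable_rpow' (a := 1) (b := 0)
      (by norm_num : -1 < -(1 / 2 : ℝ))).comp_sub_left 1
  refine (hsing.const_mul (√c)⁻¹).mono'
    (Measurable.aestronglyMeasurable (by unfold ellipticIntegrand; fun_prop)) ?_
  rw [ae_restrict_iff' measurableSet_Ioo]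
  refine ae_of_all _ fun s ⟨hs0, hs1⟩ => ?_
  have h1s : 0 < 1 - s := sub_pos.2 hs1
  have hmc : c ≤ 1 - m * s ^ 2 := by
    rcases le_or_gt 0 m with hm0 | hm0
    · exact (min_le_right _ _).trans
        (by nlinarith [mul_le_mul_of_nonneg_left (pow_le_one₀ (n := 2) hs0.le hs1.le) hm0])
    · exact (min_le_left _ _).trans (by nlinarith [sq_nonneg s])
  rw [Real.rpow_neg h1s.le, ← Real.sqrt_eq_rpow, ellipticIntegrand, Real.norm_eq_abs,
    abs_of_nonneg (by positivity), one_div, ← mul_inv]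
  exact inv_anti₀ (by positivity) (mul_le_mul (Real.sqrt_le_sqrt hmc)
    (Real.sqrt_le_sqrt (by nlinarith)) (Real.sqrt_nonneg _) (Real.sqrt_nonneg _)
    |>.trans_eq (mul_comm _ _))

section Landen

variable {α β t : ℝ}

noncomputable def landenSubst (α β t : ℝ) : ℝ := √((t - α ^ 2) * (β ^ 2 - t) / t) / (β - α)

lemma landenSubst_sq (ht : t ∈ Icc (α ^ 2) (β ^ 2)) :
    landenSubst α β t ^ 2 = (t - α ^ 2) * (β ^ 2 - t) / t / (β - α) ^ 2 := by
  have ht0 : 0 ≤ t := (sq_nonneg α).trans ht.1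
  rw [landenSubst, div_pow, Real.sq_sqrt]
  exact div_nonneg (mul_nonneg (sub_nonneg.2 ht.1) (sub_nonneg.2 ht.2)) ht0

lemma landenSubst_apply_sq_left : landenSubst α β (α ^ 2) = 0 := by
  simp [landenSubst]

lemma landenSubst_apply_sq_right : landenSubst α β (β ^ 2) = 0 := by
  simp [landenSubst]

lemma landenSubst_apply_mul (hα : 0 < α) (hαβ : α < β) :
    landenSubst α β (α * β) = 1 := by
  have hd : 0 < β - α := sub_pos.2 hαβ
  rw [landenSubst, show (α * β - α ^ 2) * (β ^ 2 - α * β) / (α * β) = (β - α) ^ 2 by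
    field_simp [hα.ne', (hα.trans hαβ).ne'], Real.sqrt_sq hd.le, div_self hd.ne']

lemma continuousOn_landenSubst (hα : 0 < α) :
    ContinuousOn (landenSubst α β) (Icc (α ^ 2) (β ^ 2)) := by
  refine (Real.continuous_sqrt.comp_continuousOn (ContinuousOn.div (by fun_prop) continuousOn_id
    fun t ht => ((pow_pos hα 2).trans_le ht.1).ne')).div_const _

lemma hasDerivAt_landenSubst (hα : 0 < α) (ht : t ∈ Ioo (α ^ 2) (β ^ 2)) :
    HasDerivAt (landenSubst α β)
      (((α * β) ^ 2 - t ^ 2) / (2 * t ^ 2 * (β - α) * √((t - α ^ 2) * (β ^ 2 - t) / t))) t := by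
  have ht0 : 0 < t := (pow_pos hα 2).trans ht.1
  have hh : 0 < (t - α ^ 2) * (β ^ 2 - t) / t :=
    div_pos (mul_pos (sub_pos.2 ht.1) (sub_pos.2 ht.2)) ht0
  have hquot : HasDerivAt (fun t => (t - α ^ 2) * (β ^ 2 - t) / t)
      (((α * β) ^ 2 - t ^ 2) / t ^ 2) t := by
    refine ((((hasDerivAt_id' t).sub_const (α ^ 2)).mul
      ((hasDerivAt_id' t).const_sub (β ^ 2))).div (hasDerivAt_id' t) ht0.ne').congr_deriv ?_
    simp only [Pi.mul_apply]
    field_simp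
    ring
  refine ((hquot.sqrt hh.ne').div_const (β - α)).congr_deriv ?_
  field_simp

lemma sqrt_one_sub_landenSubst_sq_mul (hα : 0 < α) (hαβ : α < β)
    (ht : t ∈ Ioo (α ^ 2) (β ^ 2)) :
    √(1 - landenSubst α β t ^ 2) * √(1 - ((β - α) / (β + α)) ^ 2 * landenSubst α β t ^ 2)
      = |t ^ 2 - (α * β) ^ 2| / (t * (β - α) * (β + α)) := by
  have ht0 : 0 < t := (pow_pos hα 2).trans ht.1
  have hd : 0 < β - α := sub_pos.2 hαβ
  have he : 0 < β + α := by linarith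
  have hg := landenSubst_sq (Ioo_subset_Icc_self ht)
  have h₁ : 1 - landenSubst α β t ^ 2 = (t - α * β) ^ 2 / (t * (β - α) ^ 2) := by
    rw [hg]; field_simp; ring
  have h₂ : 1 - ((β - α) / (β + α)) ^ 2 * landenSubst α β t ^ 2
      = (t + α * β) ^ 2 / (t * (β + α) ^ 2) := by
    rw [hg]; field_simp; ring
  have hprod : (t - α * β) ^ 2 / (t * (β - α) ^ 2) * ((t + α * β) ^ 2 / (t * (β + α) ^ 2))
      = ((t ^ 2 - (α * β) ^ 2) / (t * (β - α) * (β + α))) ^ 2 := by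
    field_simp; ring
  rw [← Real.sqrt_mul (by rw [h₁]; positivity), h₁, h₂, hprod, Real.sqrt_sq_eq_abs, abs_div,
    abs_of_pos (by positivity : 0 < t * (β - α) * (β + α))]

lemma abs_deriv_landenSubst_mul_ellipticIntegrand (hα : 0 < α) (hαβ : α < β)
    (ht : t ∈ Ioo (α ^ 2) (β ^ 2)) (htc : t ≠ α * β) :
    |deriv (landenSubst α β) t|
        * (2 / (α + β) * ellipticIntegrand (((β - α) / (β + α)) ^ 2) (landenSubst α β t))
      = 1 / √(t * (t - α ^ 2) * (β ^ 2 - t)) := by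
  have ht0 : 0 < t := (pow_pos hα 2).trans ht.1
  have hd : 0 < β - α := sub_pos.2 hαβ
  have he : 0 < α + β := by linarith
  have hr : 0 < √((t - α ^ 2) * (β ^ 2 - t) / t) :=
    Real.sqrt_pos.2 (div_pos (mul_pos (sub_pos.2 ht.1) (sub_pos.2 ht.2)) ht0)
  have hcubic : √(t * (t - α ^ 2) * (β ^ 2 - t)) = t * √((t - α ^ 2) * (β ^ 2 - t) / t) := by
    rw [show t * (t - α ^ 2) * (β ^ 2 - t) = t ^ 2 * ((t - α ^ 2) * (β ^ 2 - t) / t) by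
      field_simp, Real.sqrt_mul (sq_nonneg t), Real.sqrt_sq ht0.le]
  have hfold : |t ^ 2 - (α * β) ^ 2| ≠ 0 := by
    refine abs_ne_zero.2 fun h => htc ?_
    nlinarith [mul_pos hα (hα.trans hαβ)]
  rw [(hasDerivAt_landenSubst hα ht).deriv, ellipticIntegrand,
    sqrt_one_sub_landenSubst_sq_mul hα hαβ ht, hcubic, abs_div, abs_sub_comm,
    abs_of_pos (by positivity : 0 < 2 * t ^ 2 * (β - α) * √((t - α ^ 2) * (β ^ 2 - t) / t))]
  -- keep the fold factor `|t² - α²β²|` atomic, so that `field_simp` cancels it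
  generalize |t ^ 2 - (α * β) ^ 2| = D at hfold ⊢
  field_simp
  ring

lemma landenSubst_mem_Ioo (hα : 0 < α) (hαβ : α < β)
    (ht : t ∈ Ioo (α ^ 2) (β ^ 2)) (htc : t ≠ α * β) : landenSubst α β t ∈ Ioo 0 1 := by
  have ht0 : 0 < t := (pow_pos hα 2).trans ht.1
  have hd : 0 < β - α := sub_pos.2 hαβ
  have hpos : 0 < landenSubst α β t :=
    div_pos (Real.sqrt_pos.2 (div_pos (mul_pos (sub_pos.2 ht.1) (sub_pos.2 ht.2)) ht0)) hd
  refine ⟨hpos, (pow_lt_one_iff_of_nonneg hpos.le two_ne_zero).1 ?_⟩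
  rw [landenSubst_sq (Ioo_subset_Icc_self ht), div_div, div_lt_one (by positivity)]
  have : 0 < (t - α * β) ^ 2 := by have := sub_ne_zero.2 htc; positivity
  nlinarith

lemma mul_eq_zero_of_landenSubst_eq {t₁ t₂ : ℝ} (hαβ : α < β)
    (ht₁ : t₁ ∈ Ioo (α ^ 2) (β ^ 2)) (ht₂ : t₂ ∈ Ioo (α ^ 2) (β ^ 2))
    (h : landenSubst α β t₁ = landenSubst α β t₂) :
    (t₁ - t₂) * (t₁ * t₂ - (α * β) ^ 2) = 0 := by
  have hpos : ∀ t ∈ Ioo (α ^ 2) (β ^ 2), 0 < t := fun t ht => (sq_nonneg α).trans_lt ht.1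
  have hd : β - α ≠ 0 := sub_ne_zero.2 hαβ.ne'
  have hsq := congrArg (· ^ 2) h
  simp only [landenSubst_sq (Ioo_subset_Icc_self ht₁), landenSubst_sq (Ioo_subset_Icc_self ht₂)]
    at hsq
  field_simp [(hpos _ ht₁).ne', (hpos _ ht₂).ne'] at hsq
  linear_combination -hsq

lemma injOn_landenSubst_Ioo_left (hα : 0 < α) (hαβ : α < β) :
    InjOn (landenSubst α β) (Ioo (α ^ 2) (α * β)) := by
  intro t₁ ht₁ t₂ ht₂ h
  have hcb : α * β < β ^ 2 := by nlinarith
  have hprod : t₁ * t₂ < (α * β) ^ 2 := by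
    rw [sq]
    exact mul_lt_mul'' ht₁.2 ht₂.2 ((sq_nonneg α).trans ht₁.1.le) ((sq_nonneg α).trans ht₂.1.le)
  have := mul_eq_zero_of_landenSubst_eq hαβ ⟨ht₁.1, ht₁.2.trans hcb⟩ ⟨ht₂.1, ht₂.2.trans hcb⟩ h
  exact sub_eq_zero.1 ((mul_eq_zero.1 this).resolve_right (sub_neg.2 hprod).ne)

lemma injOn_landenSubst_Ioo_right (hα : 0 < α) (hαβ : α < β) :
    InjOn (landenSubst α β) (Ioo (α * β) (β ^ 2)) := by
  intro t₁ ht₁ t₂ ht₂ h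
  have hc : 0 < α * β := mul_pos hα (hα.trans hαβ)
  have hac : α ^ 2 < α * β := by nlinarith
  have hprod : (α * β) ^ 2 < t₁ * t₂ := by
    rw [sq]
    exact mul_lt_mul'' ht₁.1 ht₂.1 hc.le hc.le
  have := mul_eq_zero_of_landenSubst_eq hαβ ⟨hac.trans ht₁.1, ht₁.2⟩ ⟨hac.trans ht₂.1, ht₂.2⟩ h
  exact sub_eq_zero.1 ((mul_eq_zero.1 this).resolve_right (sub_pos.2 hprod).ne')

lemma landenSubst_image_Ioo_left (hα : 0 < α) (hαβ : α < β) :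
    landenSubst α β '' Ioo (α ^ 2) (α * β) = Ioo 0 1 := by
  have hac : α ^ 2 < α * β := by nlinarith
  have hcb : α * β < β ^ 2 := by nlinarith
  refine Subset.antisymm ?_ ?_
  · rintro _ ⟨t, ht, rfl⟩
    exact landenSubst_mem_Ioo hα hαβ ⟨ht.1, ht.2.trans hcb⟩ ht.2.ne
  · simpa only [landenSubst_apply_sq_left, landenSubst_apply_mul hα hαβ] using
      intermediate_value_Ioo hac.le
        ((continuousOn_landenSubst hα).mono (Icc_subset_Icc_right hcb.le))

lemma landenSubst_image_Ioo_right (hα : 0 < α) (hαβ : α < β) :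
    landenSubst α β '' Ioo (α * β) (β ^ 2) = Ioo 0 1 := by
  have hac : α ^ 2 < α * β := by nlinarith
  have hcb : α * β < β ^ 2 := by nlinarith
  refine Subset.antisymm ?_ ?_
  · rintro _ ⟨t, ht, rfl⟩
    exact landenSubst_mem_Ioo hα hαβ ⟨hac.trans ht.1, ht.2⟩ ht.1.ne'
  · simpa only [landenSubst_apply_sq_right, landenSubst_apply_mul hα hαβ] using
      intermediate_value_Ioo' hcb.le
        ((continuousOn_landenSubst hα).mono (Icc_subset_Icc_left hac.le))

lemma integrableOn_and_integral_cubic_of_landenSubst (hα : 0 < α) (hαβ : α < β)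
    {T : Set ℝ} (hTm : MeasurableSet T) (hT : T ⊆ Ioo (α ^ 2) (β ^ 2)) (hc : α * β ∉ T)
    (hinj : InjOn (landenSubst α β) T) (himg : landenSubst α β '' T = Ioo 0 1) :
    IntegrableOn (fun t => 1 / √(t * (t - α ^ 2) * (β ^ 2 - t))) T ∧
      ∫ t in T, 1 / √(t * (t - α ^ 2) * (β ^ 2 - t))
        = 2 / (α + β) * ellipticK (((β - α) / (β + α)) ^ 2) := by
  set k := (β - α) / (β + α)
  have hderiv : ∀ t ∈ T, HasDerivWithinAt (landenSubst α β) (deriv (landenSubst α β) t) T t :=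
    fun t ht => (hasDerivAt_landenSubst hα (hT ht)).differentiableAt.hasDerivAt.hasDerivWithinAt
  have hpull : EqOn (fun t => |deriv (landenSubst α β) t| •
        (2 / (α + β) * ellipticIntegrand (k ^ 2) (landenSubst α β t)))
      (fun t => 1 / √(t * (t - α ^ 2) * (β ^ 2 - t))) T :=
    fun t ht =>
      abs_deriv_landenSubst_mul_ellipticIntegrand hα hαβ (hT ht) (ne_of_mem_of_not_mem ht hc)
  have hk : k ^ 2 < 1 := by
    rw [sq_lt_one_iff_abs_lt_one, abs_lt, lt_div_iff₀ (by linarith), div_lt_one (by linarith)]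
    constructor <;> linarith
  have hint : IntegrableOn (fun s => 2 / (α + β) * ellipticIntegrand (k ^ 2) s) (Ioo 0 1) :=
    (integrableOn_ellipticIntegrand hk).const_mul _
  rw [← himg, integrableOn_image_iff_integrableOn_abs_deriv_smul hTm hderiv hinj] at hint
  refine ⟨hint.congr_fun hpull hTm, ?_⟩
  rw [ellipticK_eq_integral_Ioo, ← integral_const_mul, ← himg,
    integral_image_eq_integral_abs_deriv_smul hTm hderiv hinj, setIntegral_congr_fun hTm hpull]

theorem integral_cubic_eq_ellipticK (hα : 0 < α) (hαβ : α < β) :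
    ∫ t in α ^ 2..β ^ 2, 1 / √(t * (t - α ^ 2) * (β ^ 2 - t))
      = 4 / (α + β) * ellipticK (((β - α) / (β + α)) ^ 2) := by
  have hac : α ^ 2 < α * β := by nlinarith
  have hcb : α * β < β ^ 2 := by nlinarith
  obtain ⟨hint₁, heq₁⟩ := integrableOn_and_integral_cubic_of_landenSubst hα hαβ measurableSet_Ioo
    (Ioo_subset_Ioo_right hcb.le) right_notMem_Ioo (injOn_landenSubst_Ioo_left hα hαβ)
    (landenSubst_image_Ioo_left hα hαβ)
  obtain ⟨hint₂, heq₂⟩ := integrableOn_and_integral_cubic_of_landenSubst hα hαβ measurableSet_Ioo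
    (Ioo_subset_Ioo_left hac.le) left_notMem_Ioo (injOn_landenSubst_Ioo_right hα hαβ)
    (landenSubst_image_Ioo_right hα hαβ)
  rw [← intervalIntegral.integral_add_adjacent_intervals
    ((intervalIntegrable_iff_integrableOn_Ioo_of_le hac.le).2 hint₁)
    ((intervalIntegrable_iff_integrableOn_Ioo_of_le hcb.le).2 hint₂),
    intervalIntegral.integral_of_le hac.le, intervalIntegral.integral_of_le hcb.le,
    integral_Ioc_eq_integral_Ioo, integral_Ioc_eq_integral_Ioo, heq₁, heq₂]
  ring

end Landen

/-- **Complementary period of the rotational outer parametrix.** For `w₀ < w₁ < 0` and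
`m = 4√(w₀w₁)/(√(−w₀)+√(−w₁))²` one has `0 < m < 1` and
`∫_{w₀}^{w₁} dw/√(w(w−w₀)(w−w₁)) = 4K(1−m)/(√(−w₀)+√(−w₁))`. -/
theorem rotational_complementary_period_integral
    (w₀ w₁ m : ℝ) (h₀₁ : w₀ < w₁) (h₁ : w₁ < 0)
    (hm : m = 4 * Real.sqrt (w₀ * w₁) / (Real.sqrt (-w₀) + Real.sqrt (-w₁)) ^ 2) :
    (0 < m ∧ m < 1) ∧
    ∫ w in w₀..w₁, 1 / Real.sqrt (w * (w - w₀) * (w - w₁))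
      = 4 * ellipticK (1 - m) / (Real.sqrt (-w₀) + Real.sqrt (-w₁)) := by
  obtain ⟨α, β, hα, hαβ, rfl, rfl⟩ : ∃ α β : ℝ, 0 < α ∧ α < β ∧ w₀ = -β ^ 2 ∧ w₁ = -α ^ 2 :=
    ⟨√(-w₁), √(-w₀), Real.sqrt_pos.2 (neg_pos.2 h₁), Real.sqrt_lt_sqrt (by linarith) (by linarith),
      by rw [Real.sq_sqrt (by linarith), neg_neg], by rw [Real.sq_sqrt (by linarith), neg_neg]⟩
  have hβ : 0 < β := hα.trans hαβ
  rw [show -β ^ 2 * -α ^ 2 = (α * β) ^ 2 by ring, neg_neg, neg_neg, Real.sqrt_sq hα.le,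
    Real.sqrt_sq hβ.le, Real.sqrt_sq (by positivity)] at hm
  rw [neg_neg, neg_neg, Real.sqrt_sq hα.le, Real.sqrt_sq hβ.le]
  have h1m : 1 - m = ((β - α) / (β + α)) ^ 2 := by
    rw [hm]; field_simp; ring
  refine ⟨⟨by rw [hm]; positivity, ?_⟩, ?_⟩
  · have : 0 < ((β - α) / (β + α)) ^ 2 := by
      have := sub_pos.2 hαβ; positivity
    linarith
  · have hcubic (t : ℝ) :
        -t * (-t - -β ^ 2) * (-t - -α ^ 2) = t * (t - α ^ 2) * (β ^ 2 - t) := by ring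
    rw [← intervalIntegral.integral_comp_neg]
    simp only [hcubic]
    rw [integral_cubic_eq_ellipticK hα hαβ, h1m]
    ring
end

section
/- Let r > 0 and 0 < θ < π. Then the improper integral over the negative half-line evaluates as ∫_{w=−∞}^{0} dw / √(−w·(w² − 2r·cos(θ)·w + r²)) = 2·K(sin(θ/2)²)/√r. -/
open MeasureTheory Real

/-!
The substitution `w = -r tan² u`, `0 < u < π/2`, turns the cubic into
`(r tan u / cos² u)² · r · (1 - k² sin² 2u)` with `k = sin (θ/2)`, because `cos θ = 1 - 2k²`
and `sin⁴ u + cos⁴ u = 1 - sin² 2u / 2`. The Jacobian cancels everything but `2/√r`, leaving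
`(2/√r) ∫₀^{π/2} du / √(1 - k² sin² 2u)`. Doubling the variable and reflecting `sin` about `π/2`
remove the `2u`, and `s = sin u` brings the result to the defining integral of `K(k²)`.
-/

open Set intervalIntegral

variable {E : Type*} [NormedAddCommGroup E] [NormedSpace ℝ E]

theorem image_neg_mul_tan_sq_Ioo {r : ℝ} (hr : 0 < r) :
    (fun u => -r * tan u ^ 2) '' Ioo 0 (π / 2) = Iio 0 := by
  ext w
  constructor
  · rintro ⟨u, ⟨hu₀, hu₁⟩, rfl⟩
    have := mul_pos hr (pow_pos (tan_pos_of_pos_of_lt_pi_div_two hu₀ hu₁) 2)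
    simp only [mem_Iio]
    linarith
  · intro (hw : w < 0)
    have hwr : 0 < -w / r := div_pos (neg_pos.2 hw) hr
    refine ⟨arctan √(-w / r), ⟨arctan_pos.2 (sqrt_pos.2 hwr), arctan_lt_pi_div_two _⟩, ?_⟩
    simp only [tan_arctan, sq_sqrt hwr.le]
    field_simp

theorem injOn_neg_mul_tan_sq {r : ℝ} (hr : 0 < r) :
    InjOn (fun u => -r * tan u ^ 2) (Ioo 0 (π / 2)) := by
  have hsub : Ioo 0 (π / 2) ⊆ Ioo (-(π / 2)) (π / 2) := Ioo_subset_Ioo_left (by linarith [pi_pos])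
  intro a ha b hb hab
  have hsq : tan a ^ 2 = tan b ^ 2 := by simpa [hr.ne'] using hab
  exact injOn_tan (hsub ha) (hsub hb) <| (pow_left_inj₀
    (tan_pos_of_pos_of_lt_pi_div_two ha.1 ha.2).le
    (tan_pos_of_pos_of_lt_pi_div_two hb.1 hb.2).le two_ne_zero).1 hsq

theorem integral_Iio_zero_eq_integral_neg_mul_tan_sq {r : ℝ} (hr : 0 < r) (f : ℝ → E) :
    ∫ w in Iio 0, f w =
      ∫ u in Ioo 0 (π / 2), (2 * r * tan u / cos u ^ 2) • f (-r * tan u ^ 2) := by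
  have hderiv : ∀ u ∈ Ioo 0 (π / 2), HasDerivWithinAt (fun u => -r * tan u ^ 2)
      (-(2 * r * tan u / cos u ^ 2)) (Ioo 0 (π / 2)) u := fun u hu => by
    have hcos : cos u ≠ 0 := (cos_pos_of_mem_Ioo ⟨by linarith [hu.1, pi_pos], hu.2⟩).ne'
    exact (((hasDerivAt_tan hcos).pow 2).const_mul (-r)).hasDerivWithinAt.congr_deriv (by ring)
  rw [← image_neg_mul_tan_sq_Ioo hr, integral_image_eq_integral_abs_deriv_smul measurableSet_Ioo
    hderiv (injOn_neg_mul_tan_sq hr)]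
  refine setIntegral_congr_fun measurableSet_Ioo fun u hu => ?_
  have htan := tan_pos_of_pos_of_lt_pi_div_two hu.1 hu.2
  have hcos := cos_pos_of_mem_Ioo ⟨by linarith [hu.1, pi_pos], hu.2⟩
  rw [abs_neg, abs_of_pos (div_pos (by positivity) (by positivity))]

theorem cubic_at_neg_mul_tan_sq (r θ : ℝ) {u : ℝ} (hu : cos u ≠ 0) :
    -(-r * tan u ^ 2) * ((-r * tan u ^ 2) ^ 2 - 2 * r * cos θ * (-r * tan u ^ 2) + r ^ 2) =
      (r * tan u / cos u ^ 2) ^ 2 * r * (1 - sin (θ / 2) ^ 2 * sin (2 * u) ^ 2) := by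
  have hθ : cos θ = 1 - 2 * sin (θ / 2) ^ 2 := by rw [← cos_two_mul_eq_one_sub]; ring_nf
  rw [hθ, tan_eq_sin_div_cos, sin_two_mul]
  field_simp
  linear_combination r ^ 3 * sin u ^ 2 * (sin u ^ 2 + cos u ^ 2 + 1) * sin_sq_add_cos_sq u

theorem smul_integrand_at_neg_mul_tan_sq {r : ℝ} (hr : 0 < r) (θ : ℝ) {u : ℝ}
    (hu : u ∈ Ioo 0 (π / 2)) :
    (2 * r * tan u / cos u ^ 2) • (1 / √(-(-r * tan u ^ 2) *
        ((-r * tan u ^ 2) ^ 2 - 2 * r * cos θ * (-r * tan u ^ 2) + r ^ 2))) =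
      2 / √r * (1 / √(1 - sin (θ / 2) ^ 2 * sin (2 * u) ^ 2)) := by
  have htan := tan_pos_of_pos_of_lt_pi_div_two hu.1 hu.2
  have hcos := cos_pos_of_mem_Ioo ⟨by linarith [hu.1, pi_pos], hu.2⟩
  have hJ : 0 < r * tan u / cos u ^ 2 := by positivity
  rw [cubic_at_neg_mul_tan_sq r θ hcos.ne', sqrt_mul (by positivity), sqrt_mul (by positivity),
    sqrt_sq hJ.le, smul_eq_mul, mul_div_assoc, mul_div_assoc, one_div, mul_inv, mul_inv]
  field_simp

theorem continuous_one_div_sqrt_one_sub_mul_sin_sq {m : ℝ} (hm : m < 1) :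
    Continuous fun x => 1 / √(1 - m * sin x ^ 2) := by
  refine continuous_const.div (by fun_prop) fun x => (sqrt_pos.2 ?_).ne'
  nlinarith [sin_sq_le_one x, mul_nonneg (sq_nonneg (sin x)) (sub_nonneg.2 hm.le)]

theorem integral_comp_sin_zero_pi {f : ℝ → E}
    (hf : IntervalIntegrable (fun x => f (sin x)) volume 0 π) :
    ∫ x in 0..π, f (sin x) = (2 : ℝ) • ∫ x in 0..π / 2, f (sin x) := by
  have hreflect : ∫ x in π / 2..π, f (sin x) = ∫ x in 0..π / 2, f (sin x) := by
    simpa [sin_pi_sub, show π - π / 2 = π / 2 by ring] using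
      (integral_comp_sub_left (fun x => f (sin x)) π (a := 0) (b := π / 2)).symm
  have hhalf : π / 2 ∈ uIcc 0 π := by rw [uIcc_of_le pi_pos.le]; constructor <;> linarith [pi_pos]
  rw [← integral_add_adjacent_intervals (hf.mono_set (uIcc_subset_uIcc_left hhalf))
    (hf.mono_set (uIcc_subset_uIcc_right hhalf)), hreflect, two_smul]

theorem integral_comp_sin_two_mul {f : ℝ → E}
    (hf : IntervalIntegrable (fun x => f (sin x)) volume 0 π) :
    ∫ x in 0..π / 2, f (sin (2 * x)) = ∫ x in 0..π / 2, f (sin x) := by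
  rw [integral_comp_mul_left (fun x => f (sin x)) two_ne_zero, mul_zero,
    mul_div_cancel₀ π two_ne_zero, integral_comp_sin_zero_pi hf, smul_smul,
    inv_mul_cancel₀ two_ne_zero, one_smul]

theorem image_sin_Ioo_zero_pi_div_two : sin '' Ioo 0 (π / 2) = Ioo 0 1 := by
  ext s
  constructor
  · rintro ⟨u, ⟨hu₀, hu₁⟩, rfl⟩
    refine ⟨sin_pos_of_pos_of_lt_pi hu₀ (by linarith [pi_pos]), ?_⟩
    simpa using sin_lt_sin_of_lt_of_le_pi_div_two (by linarith [pi_pos]) le_rfl hu₁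
  · rintro ⟨hs₀, hs₁⟩
    exact ⟨arcsin s, ⟨arcsin_pos.2 hs₀, arcsin_lt_pi_div_two.2 hs₁⟩,
      sin_arcsin (by linarith) hs₁.le⟩

theorem ellipticK_eq_integral_sin (m : ℝ) :
    ellipticK m = ∫ u in 0..π / 2, 1 / √(1 - m * sin u ^ 2) := by
  rw [ellipticK, integral_of_le zero_le_one, integral_Ioc_eq_integral_Ioo,
    ← image_sin_Ioo_zero_pi_div_two,
    integral_image_eq_integral_abs_deriv_smul measurableSet_Ioo
      (fun u _ => (hasDerivAt_sin u).hasDerivWithinAt)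
      (injOn_sin.mono (Ioo_subset_Icc_self.trans (Icc_subset_Icc_left (by linarith [pi_pos])))),
    integral_of_le (by positivity), integral_Ioc_eq_integral_Ioo]
  refine setIntegral_congr_fun measurableSet_Ioo fun u hu => ?_
  have hcos : 0 < cos u := cos_pos_of_mem_Ioo ⟨by linarith [hu.1, pi_pos], hu.2⟩
  rw [← cos_sq', sqrt_sq hcos.le, abs_of_pos hcos, smul_eq_mul, one_div, one_div, mul_inv,
    mul_inv_cancel_left₀ hcos.ne']

/-- **Librational period over the negative half-line.** For `r > 0` and `0 < θ < π`,
`∫_{−∞}^{0} dw/√(−w(w² − 2r cos θ · w + r²)) = 2K(sin(θ/2)²)/√r`. -/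
theorem librational_negative_halfline_period
    (r θ : ℝ) (hr : 0 < r) (hθ₀ : 0 < θ) (hθπ : θ < Real.pi) :
    ∫ w in Set.Iio (0 : ℝ),
        1 / Real.sqrt (-w * (w ^ 2 - 2 * r * Real.cos θ * w + r ^ 2))
      = 2 * ellipticK (Real.sin (θ / 2) ^ 2) / Real.sqrt r := by
  have hk : sin (θ / 2) ^ 2 < 1 := by
    have : 0 < cos (θ / 2) := cos_pos_of_mem_Ioo ⟨by linarith, by linarith⟩
    nlinarith [sin_sq_add_cos_sq (θ / 2)]
  calc _ = ∫ u in Ioo 0 (π / 2), 2 / √r * (1 / √(1 - sin (θ / 2) ^ 2 * sin (2 * u) ^ 2)) := by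
        rw [integral_Iio_zero_eq_integral_neg_mul_tan_sq hr]
        exact setIntegral_congr_fun measurableSet_Ioo fun u hu =>
          smul_integrand_at_neg_mul_tan_sq hr θ hu
    _ = 2 / √r * ∫ u in 0..π / 2, 1 / √(1 - sin (θ / 2) ^ 2 * sin (2 * u) ^ 2) := by
        rw [integral_of_le (by positivity), integral_Ioc_eq_integral_Ioo,
          MeasureTheory.integral_const_mul]
    _ = 2 / √r * ellipticK (sin (θ / 2) ^ 2) := by
        rw [integral_comp_sin_two_mul (f := fun s => 1 / √(1 - sin (θ / 2) ^ 2 * s ^ 2))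
          ((continuous_one_div_sqrt_one_sub_mul_sin_sq hk).intervalIntegrable 0 π),
          ellipticK_eq_integral_sin]
    _ = _ := by ring
end

section
/- Let w₀ < w₁ < 0 be real numbers and set m := 4·√(w₀·w₁)/(√(−w₀) + √(−w₁))², which satisfies 0 < m < 1. Then ∫_{w=w₁}^{0} (2w − w₀ − w₁) / √(−w·(w−w₀)·(w−w₁)) dw = 2·(√(−w₀) + √(−w₁))·E(m). -/
open MeasureTheory Real

/-!
Write `w₀ = -a²`, `w₁ = -b²` with `0 < b < a`. The substitution `w = -u²` turns the left-hand
side into `∫₀ᵇ 2(a²+b²-2u²)/√((a²-u²)(b²-u²)) du`, and the Landen substitution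
`s = (a+b)u/(ab+u²)`, increasing from `[0,b]` onto `[0,1]`, turns `E(4ab/(a+b)²)` into
`∫₀ᵇ (a+b)(ab-u²)²/((ab+u²)²√((a²-u²)(b²-u²))) du`. The first integrand minus `2(a+b)` times the
second is the derivative of `-4u√((a²-u²)(b²-u²))/(ab+u²)`, which vanishes at `0` and at `b`.
Both integrands are integrable since `1/√((a²-u²)(b²-u²))` only has a `1/√(b-u)` singularity.
-/

open Set intervalIntegral

theorem integral_eq_integral_comp_neg_sq_mul {b : ℝ} (hb : 0 ≤ b) (g : ℝ → ℝ) :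
    ∫ w in -b ^ 2..0, g w = ∫ u in 0..b, g (-u ^ 2) * (2 * u) := by
  have hsubst := integral_comp_mul_deriv_of_deriv_nonpos (g := g) (a := 0) (b := b)
    (f := fun u => -u ^ 2) (f' := fun u => -(2 * u)) (by fun_prop)
    (fun u _ => (hasDerivAt_pow 2 u).neg.congr_deriv (by ring))
    (fun u hu => by simp only [min_eq_left hb, max_eq_right hb, mem_Ioo] at hu; linarith)
  simp only [Function.comp_apply, mul_neg, intervalIntegral.integral_neg,
    zero_pow two_ne_zero, neg_zero] at hsubst
  rw [integral_symm, ← hsubst, neg_neg]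

section Landen

variable {a b : ℝ}

theorem four_mul_div_add_sq_mem_Ioo (ha : 0 < a) (hb : 0 < b) (hab : a ≠ b) :
    4 * (a * b) / (a + b) ^ 2 ∈ Ioo 0 1 := by
  have hsq : 0 < (a - b) ^ 2 := by positivity [sub_ne_zero.mpr hab]
  constructor
  · positivity
  · rw [div_lt_one (by positivity)]
    nlinarith

noncomputable def sqrtQuartic (a b u : ℝ) : ℝ := √((a ^ 2 - u ^ 2) * (b ^ 2 - u ^ 2))

theorem quartic_pos (hb : 0 < b) (hba : b < a) {u : ℝ} (hu : u ∈ Ioo 0 b) :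
    0 < (a ^ 2 - u ^ 2) * (b ^ 2 - u ^ 2) := by
  have : 0 < a ^ 2 - u ^ 2 := by nlinarith [hu.1, hu.2]
  have : 0 < b ^ 2 - u ^ 2 := by nlinarith [hu.1, hu.2]
  positivity

theorem sqrtQuartic_pos (hb : 0 < b) (hba : b < a) {u : ℝ} (hu : u ∈ Ioo 0 b) :
    0 < sqrtQuartic a b u :=
  sqrt_pos.mpr (quartic_pos hb hba hu)

theorem intervalIntegrable_inv_sqrtQuartic (hb : 0 < b) (hba : b < a) :
    IntervalIntegrable (fun u => (sqrtQuartic a b u)⁻¹) volume 0 b := by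
  have hsing : IntervalIntegrable (fun u => (b - u) ^ (-(1 / 2) : ℝ)) volume 0 b := by
    simpa using (intervalIntegrable_rpow' (a := b) (b := 0) (by norm_num)).comp_sub_left b
  have hregular : ContinuousOn (fun u => (√((a ^ 2 - u ^ 2) * (b + u)))⁻¹) (uIcc 0 b) := by
    refine (continuous_sqrt.comp (by fun_prop)).continuousOn.inv₀ fun u hu => ?_
    rw [uIcc_of_le hb.le] at hu
    have : 0 < a ^ 2 - u ^ 2 := by nlinarith [hu.1, hu.2]
    exact (sqrt_pos.mpr (by nlinarith [hu.1])).ne'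
  refine (hsing.continuousOn_mul hregular).congr_uIoo fun u hu => ?_
  rw [uIoo_of_le hb.le] at hu
  have : 0 < a ^ 2 - u ^ 2 := by nlinarith [hu.1, hu.2]
  dsimp only
  rw [rpow_neg (by linarith [hu.2]), ← sqrt_eq_rpow, ← mul_inv, ← sqrt_mul (by nlinarith [hu.1]),
    sqrtQuartic]
  ring_nf

theorem continuous_sqrtQuartic : Continuous (sqrtQuartic a b) := by
  unfold sqrtQuartic
  fun_prop

noncomputable def landenMap (a b u : ℝ) : ℝ := (a + b) * u / (a * b + u ^ 2)

theorem hasDerivAt_landenMap (hab : 0 < a * b) (u : ℝ) :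
    HasDerivAt (landenMap a b) ((a + b) * (a * b - u ^ 2) / (a * b + u ^ 2) ^ 2) u := by
  have hden : a * b + u ^ 2 ≠ 0 := by positivity
  have h := ((hasDerivAt_id' u).const_mul (a + b)).div
    ((hasDerivAt_pow 2 u).const_add (a * b)) hden
  refine h.congr_deriv ?_
  field_simp
  ring

theorem one_sub_landenMap_sq (hab : 0 < a * b) (u : ℝ) :
    1 - landenMap a b u ^ 2 = (a ^ 2 - u ^ 2) * (b ^ 2 - u ^ 2) / (a * b + u ^ 2) ^ 2 := by
  have hden : a * b + u ^ 2 ≠ 0 := by positivity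
  unfold landenMap
  field_simp
  ring

theorem one_sub_mul_landenMap_sq (hab : 0 < a * b) (hab' : a + b ≠ 0) (u : ℝ) :
    1 - 4 * (a * b) / (a + b) ^ 2 * landenMap a b u ^ 2
      = ((a * b - u ^ 2) / (a * b + u ^ 2)) ^ 2 := by
  have hden : a * b + u ^ 2 ≠ 0 := by positivity
  unfold landenMap
  field_simp
  ring

theorem ellipticE_eq_integral_landen (hb : 0 < b) (hba : b < a) :
    ellipticE (4 * (a * b) / (a + b) ^ 2)
      = ∫ u in 0..b,
          (a + b) * (a * b - u ^ 2) ^ 2 / (a * b + u ^ 2) ^ 2 * (sqrtQuartic a b u)⁻¹ := by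
  have hab : 0 < a * b := by nlinarith
  have hsubst := integral_comp_mul_deriv_of_deriv_nonneg (a := 0) (b := b)
    (g := fun s => √(1 - 4 * (a * b) / (a + b) ^ 2 * s ^ 2) / √(1 - s ^ 2))
    (fun u _ => (hasDerivAt_landenMap hab u).continuousAt.continuousWithinAt)
    (fun u _ => hasDerivAt_landenMap hab u)
    (fun u hu => by
      simp only [min_eq_left hb.le, max_eq_right hb.le, mem_Ioo] at hu
      have : u ^ 2 < a * b := by nlinarith
      exact div_nonneg (mul_nonneg (by linarith) (by linarith)) (by positivity))
  have h0 : landenMap a b 0 = 0 := by simp [landenMap]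
  have h1 : landenMap a b b = 1 := by
    rw [landenMap, div_eq_one_iff_eq (by positivity)]
    ring
  rw [h0, h1] at hsubst
  rw [ellipticE, ← hsubst]
  refine integral_congr_Ioo_of_le hb.le fun u hu => ?_
  have hu2 : u ^ 2 < a * b := by nlinarith [hu.1, hu.2]
  have hden : 0 < a * b + u ^ 2 := by positivity
  have hQ := sqrtQuartic_pos hb hba hu
  simp only [Function.comp_apply]
  rw [one_sub_mul_landenMap_sq hab (by linarith), one_sub_landenMap_sq hab,
    sqrt_sq (div_nonneg (by linarith) hden.le), sqrt_div' _ (sq_nonneg _), sqrt_sq hden.le]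
  unfold sqrtQuartic at hQ ⊢
  field_simp

theorem hasDerivAt_landen_correction (hb : 0 < b) (hba : b < a) {u : ℝ} (hu : u ∈ Ioo 0 b) :
    HasDerivAt (fun v => -4 * v * sqrtQuartic a b v / (a * b + v ^ 2))
      (2 * (a ^ 2 + b ^ 2 - 2 * u ^ 2) * (sqrtQuartic a b u)⁻¹
        - 2 * (a + b) * ((a + b) * (a * b - u ^ 2) ^ 2 / (a * b + u ^ 2) ^ 2
          * (sqrtQuartic a b u)⁻¹)) u := by
  have hab : 0 < a * b := by nlinarith
  have hden : a * b + u ^ 2 ≠ 0 := by positivity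
  have hQ := sqrtQuartic_pos hb hba hu
  have hQsq : sqrtQuartic a b u ^ 2 = (a ^ 2 - u ^ 2) * (b ^ 2 - u ^ 2) :=
    sq_sqrt (quartic_pos hb hba hu).le
  have hquartic : HasDerivAt (fun v => (a ^ 2 - v ^ 2) * (b ^ 2 - v ^ 2))
      (-2 * u * (a ^ 2 + b ^ 2 - 2 * u ^ 2)) u :=
    (((hasDerivAt_pow 2 u).const_sub _).mul ((hasDerivAt_pow 2 u).const_sub _)).congr_deriv
      (by ring)
  have hsqrt : HasDerivAt (sqrtQuartic a b)
      (-2 * u * (a ^ 2 + b ^ 2 - 2 * u ^ 2) / (2 * sqrtQuartic a b u)) u :=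
    hquartic.sqrt (quartic_pos hb hba hu).ne'
  refine ((((hasDerivAt_id' u).const_mul (-4)).mul hsqrt).div
    ((hasDerivAt_pow 2 u).const_add (a * b)) hden).congr_deriv ?_
  simp only [Pi.mul_apply]
  field_simp
  linear_combination (-4 * (a * b - u ^ 2)) * hQsq

theorem integral_radial_eq_integral_landen (hb : 0 < b) (hba : b < a) :
    ∫ u in 0..b, 2 * (a ^ 2 + b ^ 2 - 2 * u ^ 2) * (sqrtQuartic a b u)⁻¹
      = ∫ u in 0..b, 2 * (a + b) * ((a + b) * (a * b - u ^ 2) ^ 2 / (a * b + u ^ 2) ^ 2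
          * (sqrtQuartic a b u)⁻¹) := by
  have hab : 0 < a * b := by nlinarith
  have hinv := intervalIntegrable_inv_sqrtQuartic hb hba
  have hradial := hinv.continuousOn_mul (g := fun u => 2 * (a ^ 2 + b ^ 2 - 2 * u ^ 2))
    (by fun_prop)
  have hlanden := (hinv.continuousOn_mul
    (g := fun u => (a + b) * (a * b - u ^ 2) ^ 2 / (a * b + u ^ 2) ^ 2)
    (Continuous.continuousOn (by fun_prop (disch := intro; positivity)))).const_mul (2 * (a + b))
  have hcorrection : ContinuousOn (fun v => -4 * v * sqrtQuartic a b v / (a * b + v ^ 2))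
      (Icc 0 b) :=
    (((continuous_const.mul continuous_id).mul continuous_sqrtQuartic).div (by fun_prop)
      fun v => by positivity).continuousOn
  rw [← sub_eq_zero, ← integral_sub hradial hlanden,
    integral_eq_sub_of_hasDerivAt_of_le hb.le hcorrection
      (fun u hu => hasDerivAt_landen_correction hb hba hu) (hradial.sub hlanden)]
  simp [sqrtQuartic]

theorem integral_rotational_eq (hb : 0 < b) (hba : b < a) :
    ∫ w in -b ^ 2..0, (2 * w + a ^ 2 + b ^ 2) / √(-w * (w + a ^ 2) * (w + b ^ 2))
      = 2 * (a + b) * ellipticE (4 * (a * b) / (a + b) ^ 2) := by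
  rw [integral_eq_integral_comp_neg_sq_mul hb.le, ellipticE_eq_integral_landen hb hba,
    ← intervalIntegral.integral_const_mul, ← integral_radial_eq_integral_landen hb hba]
  refine integral_congr_Ioo_of_le hb.le fun u hu => ?_
  have hQ := sqrtQuartic_pos hb hba hu
  have hroot : √(-(-u ^ 2) * (-u ^ 2 + a ^ 2) * (-u ^ 2 + b ^ 2)) = u * sqrtQuartic a b u := by
    rw [sqrtQuartic, ← sqrt_sq hu.1.le, ← sqrt_mul (sq_nonneg u), sqrt_sq hu.1.le]
    ring_nf
  rw [hroot]
  field_simp [hu.1.ne']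
  ring

end Landen

/-- **An elliptic integral of the second kind in the rotational case.**
For `w₀ < w₁ < 0` and `m = 4√(w₀w₁)/(√(−w₀)+√(−w₁))²` one has `0 < m < 1` and
`∫_{w₁}^{0} (2w−w₀−w₁) dw/√(−w(w−w₀)(w−w₁)) = 2(√(−w₀)+√(−w₁)) E(m)`. -/
theorem rotational_second_kind_integral
    (w₀ w₁ m : ℝ) (h₀₁ : w₀ < w₁) (h₁ : w₁ < 0)
    (hm : m = 4 * Real.sqrt (w₀ * w₁) / (Real.sqrt (-w₀) + Real.sqrt (-w₁)) ^ 2) :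
    (0 < m ∧ m < 1) ∧
    ∫ w in w₁..(0 : ℝ), (2 * w - w₀ - w₁) / Real.sqrt (-w * (w - w₀) * (w - w₁))
      = 2 * (Real.sqrt (-w₀) + Real.sqrt (-w₁)) * ellipticE m := by
  obtain ⟨a, ha, rfl⟩ : ∃ a, 0 < a ∧ w₀ = -a ^ 2 :=
    ⟨√(-w₀), sqrt_pos.mpr (by linarith), by rw [sq_sqrt (by linarith), neg_neg]⟩
  obtain ⟨b, hb, rfl⟩ : ∃ b, 0 < b ∧ w₁ = -b ^ 2 :=
    ⟨√(-w₁), sqrt_pos.mpr (by linarith), by rw [sq_sqrt (by linarith), neg_neg]⟩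
  have hba : b < a := by nlinarith
  rw [neg_neg, neg_neg, sqrt_sq ha.le, sqrt_sq hb.le, neg_mul_neg, ← mul_pow,
    sqrt_sq (by positivity)] at hm
  subst hm
  rw [neg_neg, neg_neg, sqrt_sq ha.le, sqrt_sq hb.le]
  refine ⟨four_mul_div_add_sq_mem_Ioo ha hb hba.ne', ?_⟩
  simpa only [sub_neg_eq_add] using integral_rotational_eq hb hba
end
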